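/- arXiv:2512.13088 — 3 statements merged into one kernel-verified Lean document; each statement's English description precedes it below -/
import Mathlib

section
/- Let σ ≥ 0 be a real number and n ≥ 1 an integer. Then for every integer η with n+1 ≤ η ≤ 2n and every t ∈ ℝ, the first Picard iterate coefficient at k = (1,η) equals I^{(n)}_{(1,η)}(t) = 2 e^{−it} sin(t) · n^{−σ−1/2}. -/
noncomputable section

/-- Squared Euclidean norm of a lattice point `k ∈ ℤ²`. -/
def nsq (k : ℤ × ℤ) : ℝ := (k.1 : ℝ) ^ 2 + (k.2 : ℝ) ^ 2

/-- The initial data `φ_n` (depending on `σ`). -/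
def phi (σ : ℝ) (n : ℕ) (k : ℤ × ℤ) : ℂ :=
  if k.1 = 0 ∧ (n : ℤ) ≤ k.2 ∧ k.2 ≤ 2 * n then (((n : ℝ) ^ (-σ - 1/2) : ℝ) : ℂ)
  else if k = (1, 0) then 1
  else if k = (2, 0) then 1
  else 0

/-- The time weight `W(t,Ω) = (1 - e^{-itΩ})/(iΩ)` for `Ω ≠ 0`, and `W(t,0) = t`. -/
def W (t Ω : ℝ) : ℂ :=
  if Ω ≠ 0 then (1 - Complex.exp (-(Complex.I * t * Ω))) / (Complex.I * Ω)
  else (t : ℂ)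

/-- The resonance function `Ω = |k₁|² - |k₂|² + |k₃|² - |k|²`. -/
def Omg (k₁ k₂ k₃ k : ℤ × ℤ) : ℝ := nsq k₁ - nsq k₂ + nsq k₃ - nsq k

/-- The (gauge-renormalized, conjugated by the linear flow) first Picard iterate
coefficient `I^{(n)}_k(t)`. -/
def picard (σ : ℝ) (n : ℕ) (k : ℤ × ℤ) (t : ℝ) : ℂ :=
  (∑' c : (ℤ × ℤ) × (ℤ × ℤ) × (ℤ × ℤ),
    if c.1 - c.2.1 + c.2.2 = k ∧ c.2.1 ≠ c.1 ∧ c.2.1 ≠ c.2.2 then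
      W t (Omg c.1 c.2.1 c.2.2 k) * phi σ n c.1 * (starRingEnd ℂ) (phi σ n c.2.1)
        * phi σ n c.2.2
    else 0)
  + (t : ℂ) * ((‖phi σ n k‖) ^ 2 : ℝ) * phi σ n k

lemma phi_ne {σ : ℝ} {n : ℕ} {k : ℤ × ℤ} (h : phi σ n k ≠ 0) :
    (k.1 = 0 ∧ (n : ℤ) ≤ k.2 ∧ k.2 ≤ 2 * n) ∨ k = (1, 0) ∨ k = (2, 0) := by
  unfold phi at h
  split_ifs at h with h1 h2 h3 <;> tauto

/-- For `σ ≥ 0`, `n ≥ 1`, every integer `η` with `n+1 ≤ η ≤ 2n` and every `t ∈ ℝ`,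
the first Picard iterate coefficient at `k = (1,η)` equals
`2 e^{-it} sin(t) · n^{-σ-1/2}`. -/
theorem statement0 (σ : ℝ) (hσ : 0 ≤ σ) (n : ℕ) (hn : 1 ≤ n) (η : ℤ)
    (hη₁ : (n : ℤ) + 1 ≤ η) (hη₂ : η ≤ 2 * n) (t : ℝ) :
    picard σ n (1, η) t
      = 2 * Complex.exp (-(Complex.I * t)) * (Real.sin t : ℂ)
          * (((n : ℝ) ^ (-σ - 1/2) : ℝ) : ℂ) := by
  have hnR : (0 : ℝ) < (n : ℝ) := by exact_mod_cast hn
  set cv : ℂ := (((n : ℝ) ^ (-σ - 1/2) : ℝ) : ℂ) with hcv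
  set T1 : (ℤ × ℤ) × (ℤ × ℤ) × (ℤ × ℤ) := ((2,0),(1,0),(0,η)) with hT1
  set T2 : (ℤ × ℤ) × (ℤ × ℤ) × (ℤ × ℤ) := ((0,η),(1,0),(2,0)) with hT2
  set f : (ℤ × ℤ) × (ℤ × ℤ) × (ℤ × ℤ) → ℂ := fun c =>
    if c.1 - c.2.1 + c.2.2 = (1, η) ∧ c.2.1 ≠ c.1 ∧ c.2.1 ≠ c.2.2 then
      W t (Omg c.1 c.2.1 c.2.2 (1, η)) * phi σ n c.1 * (starRingEnd ℂ) (phi σ n c.2.1)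
        * phi σ n c.2.2
    else 0 with hf
  have hphik : phi σ n (1, η) = 0 := by
    unfold phi
    split_ifs with h1 h2 h3 <;> simp_all [Prod.ext_iff] <;> omega
  have hvanish : ∀ c ∉ ({T1, T2} : Finset ((ℤ × ℤ) × (ℤ × ℤ) × (ℤ × ℤ))), f c = 0 := by
    rintro ⟨a, b, d⟩ hc
    simp only [Finset.mem_insert, Finset.mem_singleton, not_or] at hc
    obtain ⟨hc1, hc2⟩ := hc
    by_contra hfc
    rw [hf] at hfc
    simp only at hfc
    split_ifs at hfc with hcond
    · obtain ⟨hk, hne1, hne2⟩ := hcond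
      have ha : phi σ n a ≠ 0 := fun h => hfc (by simp [h])
      have hb : phi σ n b ≠ 0 := fun h => hfc (by simp [h])
      have hd : phi σ n d ≠ 0 := fun h => hfc (by simp [h])
      have hk1 : a.1 - b.1 + d.1 = 1 := congrArg (Prod.fst) hk
      have hk2 : a.2 - b.2 + d.2 = η := congrArg (Prod.snd) hk
      have haa := phi_ne ha
      have hbb := phi_ne hb
      have hdd := phi_ne hd
      clear hfc hf hphik hcv hk hnR hσ
      obtain ⟨a1, a2⟩ := a; obtain ⟨b1, b2⟩ := b; obtain ⟨d1, d2⟩ := d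
      simp only [Prod.mk.injEq, Prod.ext_iff] at haa hbb hdd hk1 hk2 hc1 hc2 hne1 hne2 ⊢
      rcases haa with ⟨ha1, ha2, ha3⟩ | ⟨ha1, ha2⟩ | ⟨ha1, ha2⟩ <;>
        rcases hbb with ⟨hb1, hb2, hb3⟩ | ⟨hb1, hb2⟩ | ⟨hb1, hb2⟩ <;>
        rcases hdd with ⟨hd1, hd2, hd3⟩ | ⟨hd1, hd2⟩ | ⟨hd1, hd2⟩ <;>
        simp_all <;> omega
    · exact hfc rfl
  have hT12 : T1 ≠ T2 := by
    simp [hT1, hT2, Prod.ext_iff]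
  have hsum : (∑' c, f c) = f T1 + f T2 := by
    rw [tsum_eq_sum hvanish, Finset.sum_pair hT12]
  have hcond1 : (T1.1 - T1.2.1 + T1.2.2 = ((1:ℤ), η) ∧ T1.2.1 ≠ T1.1 ∧ T1.2.1 ≠ T1.2.2) := by
    refine ⟨?_, ?_, ?_⟩ <;> simp [hT1, Prod.ext_iff] <;> omega
  have hcond2 : (T2.1 - T2.2.1 + T2.2.2 = ((1:ℤ), η) ∧ T2.2.1 ≠ T2.1 ∧ T2.2.1 ≠ T2.2.2) := by
    refine ⟨?_, ?_, ?_⟩ <;> simp [hT2, Prod.ext_iff] <;> omega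
  have hphi10 : phi σ n (1, 0) = 1 := by
    unfold phi
    rw [if_neg (by simp), if_pos rfl]
  have hphi20 : phi σ n (2, 0) = 1 := by
    unfold phi
    rw [if_neg (by simp), if_neg (by simp [Prod.ext_iff]), if_pos rfl]
  have hphi0η : phi σ n (0, η) = cv := by
    unfold phi
    rw [if_pos ⟨rfl, by omega, hη₂⟩]
  have hOm1 : Omg (2,0) (1,0) (0,η) (1,η) = 2 := by
    simp [Omg, nsq]; ring
  have hOm2 : Omg (0,η) (1,0) (2,0) (1,η) = 2 := by
    simp [Omg, nsq]; ring
  have hfT1 : f T1 = W t 2 * cv := by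
    rw [hf]; simp only [hT1]
    rw [if_pos hcond1]
    simp only [hT1] at hcond1 ⊢
    rw [hOm1, hphi20, hphi10, hphi0η]
    simp
  have hfT2 : f T2 = W t 2 * cv := by
    rw [hf]; simp only [hT2]
    rw [if_pos hcond2]
    simp only [hT2] at hcond2 ⊢
    rw [hOm2, hphi0η, hphi10, hphi20]
    simp [mul_comm]
  have hW : (2 : ℂ) * W t 2 = 2 * Complex.exp (-(Complex.I * t)) * (Real.sin t : ℂ) := by
    unfold W
    rw [if_pos (by norm_num)]
    rw [Complex.ofReal_sin, Complex.sin]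
    push_cast
    have h2 : Complex.exp (-(Complex.I * (t:ℂ) * 2)) =
        Complex.exp (-(Complex.I * t)) * Complex.exp (-(Complex.I * t)) := by
      rw [← Complex.exp_add]; ring_nf
    have h3 : Complex.exp (-(t:ℂ) * Complex.I) = Complex.exp (-(Complex.I * t)) := by
      congr 1; ring
    have h4 : Complex.exp (-(Complex.I * t)) * Complex.exp ((t:ℂ) * Complex.I) = 1 := by
      rw [← Complex.exp_add]; ring_nf; exact Complex.exp_zero
    rw [h2, h3]
    have hI : (Complex.I * 2 : ℂ) ≠ 0 := by simp [Complex.I_ne_zero]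
    field_simp
    have h5 : Complex.exp (-(Complex.I * t)) * Complex.exp (Complex.I * (t:ℂ)) = 1 := by
      rw [← Complex.exp_add]; ring_nf; exact Complex.exp_zero
    set E := Complex.exp (-(Complex.I * t)) with hE
    set F := Complex.exp ((t:ℂ) * Complex.I) with hFd
    linear_combination -h5 + (E*Complex.exp (Complex.I * t) - E^2) * Complex.I_sq
  calc picard σ n (1,η) t
      = (∑' c, f c) + (t : ℂ) * ((‖phi σ n (1,η)‖) ^ 2 : ℝ) * phi σ n (1,η) := rfl
    _ = 2 * W t 2 * cv := by rw [hsum, hfT1, hfT2, hphik]; ring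
    _ = _ := by rw [hW]

end
end

section
/- Let s ≥ 1 be a real number and m ≥ 2 an integer. There exists a constant C = C(s,m) > 0 such that for all k₁,…,k_{2m} ∈ ℤ² satisfying Σ_{j=1}^{2m} (−1)^{j−1} k_j = 0, one has |ψ_{2s}(k⃗)| ≤ C λ₁(k⃗)^{2s−2} ( |Ω(k⃗)| + λ₃(k⃗)² ). -/
noncomputable section

/-- Euclidean norm of a lattice point `k ∈ ℤ²`. -/
def nrm (k : ℤ × ℤ) : ℝ := Real.sqrt (nsq k)

/-- The `(i+1)`-th largest element of a list of reals (so `i = 0` gives the largest,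
`i = 2` the third largest); `0` if the list has fewer than `i+1` elements. -/
def kthLargest (l : List ℝ) (i : ℕ) : ℝ :=
  (l.mergeSort fun a b => decide (b ≤ a)).getD i 0

/-- `Ω(k⃗) = Σ_j ι_j |k_j|²` with alternating signs `ι_j = (-1)^{j-1}` (zero-based indices). -/
def omg {n : ℕ} (kv : Fin n → ℤ × ℤ) : ℝ := ∑ j : Fin n, (-1 : ℝ) ^ (j.val) * nsq (kv j)

/-- `ψ_{2s}(k⃗) = Σ_j ι_j |k_j|^{2s}` with alternating signs (zero-based indices). -/
def psi (s : ℝ) {n : ℕ} (kv : Fin n → ℤ × ℤ) : ℝ :=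
  ∑ j : Fin n, (-1 : ℝ) ^ (j.val) * nsq (kv j) ^ s


lemma auxA {s X x : ℝ} (hs : 1 ≤ s) (hx : 0 ≤ x) (hxX : x ≤ X) :
    x ^ s ≤ X ^ (s - 1) * x := by
  rcases hx.eq_or_lt with h | h
  · rw [← h, Real.zero_rpow (by linarith), mul_zero]
  · have h1 : x ^ s = x ^ (s - 1) * x := by
      conv_lhs => rw [show s = s - 1 + 1 by ring, Real.rpow_add h, Real.rpow_one]
    rw [h1]
    have h2 : x ^ (s - 1) ≤ X ^ (s - 1) :=
      Real.rpow_le_rpow h.le hxX (by linarith)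
    exact mul_le_mul_of_nonneg_right h2 h.le

lemma auxB {s X x y : ℝ} (hs : 1 ≤ s) (hy : 0 ≤ y) (hyx : y ≤ x) (hxX : x ≤ X) :
    x ^ s - y ^ s ≤ s * X ^ (s - 1) * (x - y) := by
  have hx : 0 ≤ x := hy.trans hyx
  rcases hx.eq_or_lt with h | h
  · have hy0 : y = 0 := le_antisymm (h ▸ hyx) hy
    simp [← h, hy0]
  · have ht : -1 ≤ y / x - 1 := by
      have : 0 ≤ y / x := div_nonneg hy h.le
      linarith
    have hb := one_add_mul_self_le_rpow_one_add ht hs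
    have h2 : (1 + (y / x - 1)) = y / x := by ring
    rw [h2, Real.div_rpow hy h.le] at hb
    have hxs : 0 < x ^ s := Real.rpow_pos_of_pos h s
    have key : x ^ s * (1 + s * (y / x - 1)) ≤ y ^ s := by
      calc x ^ s * (1 + s * (y / x - 1)) ≤ x ^ s * (y ^ s / x ^ s) :=
            mul_le_mul_of_nonneg_left hb hxs.le
        _ = y ^ s := by field_simp
    have hxs1 : x ^ s = x ^ (s - 1) * x := by
      conv_lhs => rw [show s = s - 1 + 1 by ring, Real.rpow_add h, Real.rpow_one]
    have h4 : x ^ s * (y / x) = x ^ (s - 1) * y := by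
      rw [hxs1]; field_simp
    have h5 : x ^ s - y ^ s ≤ s * x ^ (s - 1) * (x - y) := by nlinarith [key, h4, hxs1]
    have h6 : x ^ (s - 1) ≤ X ^ (s - 1) := Real.rpow_le_rpow h.le hxX (by linarith)
    have h7 := mul_le_mul_of_nonneg_right h6 (sub_nonneg.2 hyx)
    nlinarith [h7, hs]

lemma auxB' {s X x y : ℝ} (hs : 1 ≤ s) (hx : 0 ≤ x) (hy : 0 ≤ y)
    (hxX : x ≤ X) (hyX : y ≤ X) :
    |x ^ s - y ^ s| ≤ s * X ^ (s - 1) * |x - y| := by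
  rcases le_total y x with h | h
  · rw [abs_of_nonneg (sub_nonneg.2 (Real.rpow_le_rpow hy h (by linarith))),
      abs_of_nonneg (sub_nonneg.2 h)]
    exact auxB hs hy h hxX
  · rw [abs_sub_comm, abs_sub_comm x y,
      abs_of_nonneg (sub_nonneg.2 (Real.rpow_le_rpow hx h (by linarith))),
      abs_of_nonneg (sub_nonneg.2 h)]
    exact auxB hs hx h hyX

lemma auxC {s X x y ε δ : ℝ} (hs : 1 ≤ s) (hx : 0 ≤ x) (hy : 0 ≤ y)
    (hxX : x ≤ X) (hyX : y ≤ X) (hε : ε = 1 ∨ ε = -1) (hδ : δ = 1 ∨ δ = -1) :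
    |ε * x ^ s + δ * y ^ s| ≤ s * X ^ (s - 1) * |ε * x + δ * y| := by
  have hX : 0 ≤ X := hx.trans hxX
  have hX1 : 0 ≤ X ^ (s - 1) := Real.rpow_nonneg hX _
  have hsum : |x ^ s + y ^ s| ≤ s * X ^ (s - 1) * |x + y| := by
    rw [abs_of_nonneg (by positivity : (0:ℝ) ≤ x ^ s + y ^ s),
      abs_of_nonneg (by linarith : (0:ℝ) ≤ x + y)]
    have h1 := auxA hs hx hxX
    have h2 := auxA hs hy hyX
    nlinarith [mul_nonneg hX1 hx, mul_nonneg hX1 hy]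
  have hdiff := auxB' hs hx hy hxX hyX
  rcases hε with rfl | rfl <;> rcases hδ with rfl | rfl <;>
    simp only [one_mul, neg_one_mul, ← sub_eq_add_neg]
  · exact hsum
  · exact hdiff
  · rw [show -x ^ s + y ^ s = -(x ^ s - y ^ s) by ring,
      show -x + y = -(x - y) by ring, abs_neg, abs_neg]
    exact hdiff
  · rw [show -x ^ s - y ^ s = -(x ^ s + y ^ s) by ring,
      show -x - y = -(x + y) by ring, abs_neg, abs_neg]
    exact hsum

theorem card_filter_eq_countP' (n : ℕ) (f : Fin n → ℝ) (c : ℝ) :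
    (Finset.univ.filter (fun j => c < f j)).card
      = (List.ofFn f).countP (fun v => decide (c < v)) := by
  rw [List.ofFn_eq_map, List.countP_map, Fin.univ_def]
  simp [Finset.filter, Finset.card, Multiset.filter_coe, List.countP_eq_length_filter,
    Function.comp_def]

/-- For `s ≥ 1` and `m ≥ 2` there is `C = C(s,m) > 0` such that for all `k₁,…,k_{2m} ∈ ℤ²`
with `Σ_j (-1)^{j-1} k_j = 0`, one has
`|ψ_{2s}(k⃗)| ≤ C λ₁(k⃗)^{2s-2} (|Ω(k⃗)| + λ₃(k⃗)²)`. -/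
theorem statement3 (s : ℝ) (hs : 1 ≤ s) (m : ℕ) (hm : 2 ≤ m) :
    ∃ C : ℝ, 0 < C ∧ ∀ kv : Fin (2 * m) → ℤ × ℤ,
      (∑ j : Fin (2 * m), ((-1 : ℤ) ^ (j.val)) • kv j) = 0 →
      |psi s kv| ≤
        C * (kthLargest (List.ofFn fun j => nrm (kv j)) 0) ^ (2 * s - 2) *
          (|omg kv| + (kthLargest (List.ofFn fun j => nrm (kv j)) 2) ^ 2) := by
  classical
  have hs0 : (0:ℝ) < s := by linarith
  refine ⟨(8 * m + 8) * s, by positivity, ?_⟩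
  intro kv _
  set f : Fin (2 * m) → ℝ := fun j => nrm (kv j) with hf
  set l : List ℝ := List.ofFn f with hl
  set σ : List ℝ := l.mergeSort (fun a b => decide (b ≤ a)) with hσ
  have hperm : σ.Perm l := List.mergeSort_perm l _
  have hsort : σ.Pairwise (fun a b : ℝ => b ≤ a) := by
    have := List.pairwise_mergeSort (le := fun a b : ℝ => decide (b ≤ a))
      (by intro a b c; simp only [decide_eq_true_eq]; exact fun h1 h2 => le_trans h2 h1)
      (by intro a b; simp only [Bool.or_eq_true, decide_eq_true_eq]; exact le_total b a) l
    simpa using this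
  have hσlen : σ.length = 2 * m := by
    rw [hperm.length_eq, hl, List.length_ofFn]
  have h3 : 3 ≤ σ.length := by omega
  obtain ⟨y0, t0, h0⟩ := List.exists_cons_of_ne_nil
    (l := σ) (by intro h; rw [h] at h3; simp at h3)
  obtain ⟨y1, t1, h1⟩ := List.exists_cons_of_ne_nil
    (l := t0) (by intro h; rw [h0, h] at h3; simp at h3)
  obtain ⟨y2, t2, h2⟩ := List.exists_cons_of_ne_nil
    (l := t1) (by intro h; rw [h0, h1, h] at h3; simp at h3)
  have hσ3 : σ = y0 :: y1 :: y2 :: t2 := by rw [h0, h1, h2]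
  -- identify the kthLargest values
  have hL1 : kthLargest l 0 = y0 := by rw [kthLargest, ← hσ, hσ3]; rfl
  have hL3 : kthLargest l 2 = y2 := by rw [kthLargest, ← hσ, hσ3]; rfl
  -- all elements ≤ y0
  have hmax : ∀ v ∈ l, v ≤ y0 := by
    intro v hv
    have hvσ : v ∈ σ := hperm.mem_iff.2 hv
    rw [hσ3] at hvσ
    rcases List.mem_cons.1 hvσ with rfl | hvt
    · exact le_refl _
    · exact (List.pairwise_cons.1 (hσ3 ▸ hsort)).1 v hvt
  -- nonnegativity of elements
  have hmem_nonneg : ∀ v ∈ l, 0 ≤ v := by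
    intro v hv
    rw [hl, List.mem_ofFn] at hv
    obtain ⟨i, rfl⟩ := hv
    exact Real.sqrt_nonneg _
  have hy0 : 0 ≤ y0 := hmem_nonneg y0 (hperm.mem_iff.1 (by rw [hσ3]; simp))
  have hy2 : 0 ≤ y2 := hmem_nonneg y2 (hperm.mem_iff.1 (by rw [hσ3]; simp))
  -- the exceptional set
  set S : Finset (Fin (2 * m)) := Finset.univ.filter (fun j => y2 < f j) with hS
  have hScard : S.card ≤ 2 := by
    rw [hS, card_filter_eq_countP', ← hl, ← hperm.countP_eq, hσ3]
    have htail : List.countP (fun v => decide (y2 < v)) (y2 :: t2) = 0 := by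
      rw [List.countP_eq_zero]
      intro a ha
      rcases List.mem_cons.1 ha with rfl | hat
      · simp
      · have : a ≤ y2 := by
          have hp := hσ3 ▸ hsort
          have := (List.pairwise_cons.1 ((List.pairwise_cons.1
            ((List.pairwise_cons.1 hp).2)).2)).1 a hat
          exact this
        simp [not_lt.2 this]
    simp only [List.countP_cons, htail]
    split <;> split <;> omega
  -- analytic part
  have hx0 : ∀ j, 0 ≤ nsq (kv j) := fun j => add_nonneg (sq_nonneg _) (sq_nonneg _)
  have hxf : ∀ j, nsq (kv j) = f j ^ 2 := fun j => (Real.sq_sqrt (hx0 j)).symm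
  have hfl : ∀ j, f j ∈ l := fun j => by rw [hl]; exact List.mem_ofFn.2 ⟨j, rfl⟩
  have hf0 : ∀ j, 0 ≤ f j := fun j => Real.sqrt_nonneg _
  set X : ℝ := y0 ^ 2 with hXdef
  have hX0 : 0 ≤ X := sq_nonneg _
  have hXs : 0 ≤ X ^ (s - 1) := Real.rpow_nonneg hX0 _
  have hxX : ∀ j, nsq (kv j) ≤ X := fun j => by
    rw [hxf j, hXdef]; exact pow_le_pow_left₀ (hf0 j) (hmax _ (hfl j)) 2
  set Sc : Finset (Fin (2 * m)) := Finset.univ.filter (fun j => ¬ y2 < f j) with hSc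
  have hxS : ∀ j ∈ Sc, nsq (kv j) ≤ y2 ^ 2 := by
    intro j hj
    rw [hSc, Finset.mem_filter] at hj
    rw [hxf j]
    exact pow_le_pow_left₀ (hf0 j) (not_lt.1 hj.2) 2
  have hsign : ∀ j : Fin (2 * m), ((-1 : ℝ)) ^ (j : ℕ) = 1 ∨ ((-1 : ℝ)) ^ (j : ℕ) = -1 :=
    fun j => (Nat.even_or_odd j.val).imp (fun h => h.neg_one_pow) (fun h => h.neg_one_pow)
  have habs1 : ∀ j : Fin (2 * m), |((-1 : ℝ)) ^ (j : ℕ)| = 1 := fun j => by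
    rcases hsign j with h | h <;> rw [h] <;> norm_num
  -- decomposition of psi and omg
  have hψ : psi s kv = (∑ j ∈ S, (-1 : ℝ) ^ (j : ℕ) * nsq (kv j) ^ s)
      + ∑ j ∈ Sc, (-1 : ℝ) ^ (j : ℕ) * nsq (kv j) ^ s := by
    rw [psi, ← Finset.sum_filter_add_sum_filter_not Finset.univ (fun j => y2 < f j)]
  have hΩ : omg kv = (∑ j ∈ S, (-1 : ℝ) ^ (j : ℕ) * nsq (kv j))
      + ∑ j ∈ Sc, (-1 : ℝ) ^ (j : ℕ) * nsq (kv j) := by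
    rw [omg, ← Finset.sum_filter_add_sum_filter_not Finset.univ (fun j => y2 < f j)]
  -- tail bounds
  have htailψ : |∑ j ∈ Sc, (-1 : ℝ) ^ (j : ℕ) * nsq (kv j) ^ s|
      ≤ (2 * m : ℝ) * (X ^ (s - 1) * y2 ^ 2) := by
    calc |∑ j ∈ Sc, (-1 : ℝ) ^ (j : ℕ) * nsq (kv j) ^ s|
        ≤ ∑ j ∈ Sc, |(-1 : ℝ) ^ (j : ℕ) * nsq (kv j) ^ s| := Finset.abs_sum_le_sum_abs _ _
      _ ≤ ∑ _j ∈ Sc, X ^ (s - 1) * y2 ^ 2 := by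
          apply Finset.sum_le_sum
          intro j hj
          rw [abs_mul, habs1 j, one_mul, abs_of_nonneg (Real.rpow_nonneg (hx0 j) s)]
          calc nsq (kv j) ^ s ≤ X ^ (s - 1) * nsq (kv j) := auxA hs (hx0 j) (hxX j)
            _ ≤ X ^ (s - 1) * y2 ^ 2 := mul_le_mul_of_nonneg_left (hxS j hj) hXs
      _ ≤ ∑ _j ∈ (Finset.univ : Finset (Fin (2 * m))), X ^ (s - 1) * y2 ^ 2 :=
          Finset.sum_le_sum_of_subset_of_nonneg (Finset.filter_subset _ _)
            (fun _ _ _ => mul_nonneg hXs (sq_nonneg _))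
      _ = (2 * m : ℝ) * (X ^ (s - 1) * y2 ^ 2) := by
          rw [Finset.sum_const, Finset.card_univ, Fintype.card_fin, nsmul_eq_mul]
          push_cast; ring
  have htailΩ : |∑ j ∈ Sc, (-1 : ℝ) ^ (j : ℕ) * nsq (kv j)| ≤ (2 * m : ℝ) * y2 ^ 2 := by
    calc |∑ j ∈ Sc, (-1 : ℝ) ^ (j : ℕ) * nsq (kv j)|
        ≤ ∑ j ∈ Sc, |(-1 : ℝ) ^ (j : ℕ) * nsq (kv j)| := Finset.abs_sum_le_sum_abs _ _
      _ ≤ ∑ _j ∈ Sc, y2 ^ 2 := by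
          apply Finset.sum_le_sum
          intro j hj
          rw [abs_mul, habs1 j, one_mul, abs_of_nonneg (hx0 j)]
          exact hxS j hj
      _ ≤ ∑ _j ∈ (Finset.univ : Finset (Fin (2 * m))), y2 ^ 2 :=
          Finset.sum_le_sum_of_subset_of_nonneg (Finset.filter_subset _ _)
            (fun _ _ _ => sq_nonneg _)
      _ = (2 * m : ℝ) * y2 ^ 2 := by
          rw [Finset.sum_const, Finset.card_univ, Fintype.card_fin, nsmul_eq_mul]
          push_cast; ring
  -- head bounds
  have hheadΩ : |∑ j ∈ S, (-1 : ℝ) ^ (j : ℕ) * nsq (kv j)|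
      ≤ |omg kv| + (2 * m : ℝ) * y2 ^ 2 := by
    have heq : ∑ j ∈ S, (-1 : ℝ) ^ (j : ℕ) * nsq (kv j)
        = omg kv - ∑ j ∈ Sc, (-1 : ℝ) ^ (j : ℕ) * nsq (kv j) := by
      rw [hΩ]; ring
    rw [heq]
    calc |omg kv - ∑ j ∈ Sc, (-1 : ℝ) ^ (j : ℕ) * nsq (kv j)|
        ≤ |omg kv| + |∑ j ∈ Sc, (-1 : ℝ) ^ (j : ℕ) * nsq (kv j)| := abs_sub _ _
      _ ≤ |omg kv| + (2 * m : ℝ) * y2 ^ 2 := by linarith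
  have hhead : |∑ j ∈ S, (-1 : ℝ) ^ (j : ℕ) * nsq (kv j) ^ s|
      ≤ s * X ^ (s - 1) * |∑ j ∈ S, (-1 : ℝ) ^ (j : ℕ) * nsq (kv j)| := by
    interval_cases hc : S.card
    · rw [Finset.card_eq_zero.1 hc]
      simp only [Finset.sum_empty, abs_zero]
      positivity
    · obtain ⟨a, ha⟩ := Finset.card_eq_one.1 hc
      rw [ha, Finset.sum_singleton, Finset.sum_singleton]
      rw [abs_mul, habs1 a, one_mul, abs_of_nonneg (Real.rpow_nonneg (hx0 a) s),
        abs_mul, habs1 a, one_mul, abs_of_nonneg (hx0 a)]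
      calc nsq (kv a) ^ s ≤ X ^ (s - 1) * nsq (kv a) := auxA hs (hx0 a) (hxX a)
        _ ≤ s * (X ^ (s - 1) * nsq (kv a)) := le_mul_of_one_le_left
            (mul_nonneg hXs (hx0 a)) hs
        _ = s * X ^ (s - 1) * nsq (kv a) := by ring
    · obtain ⟨a, b, hab, hab2⟩ := Finset.card_eq_two.1 hc
      rw [hab2, Finset.sum_pair hab, Finset.sum_pair hab]
      exact auxC hs (hx0 a) (hx0 b) (hxX a) (hxX b) (hsign a) (hsign b)
  -- convert exponents
  have hXeq : X ^ (s - 1) = y0 ^ (2 * s - 2) := by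
    rw [show (2 * s - 2) = 2 * (s - 1) by ring, Real.rpow_mul hy0,
      show ((2 : ℝ)) = ((2 : ℕ) : ℝ) by norm_num, Real.rpow_natCast]
  -- final assembly
  rw [hL1, hL3, ← hXeq]
  set P : ℝ := X ^ (s - 1) with hP
  set A : ℝ := |omg kv| with hA
  set B : ℝ := y2 ^ 2 with hB
  have hA0 : 0 ≤ A := abs_nonneg _
  have hB0 : 0 ≤ B := sq_nonneg _
  have hm2 : (2 : ℝ) ≤ (m : ℝ) := by exact_mod_cast hm
  have hchain : |psi s kv| ≤ s * P * (A + (2 * m : ℝ) * B) + (2 * m : ℝ) * (P * B) := by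
    rw [hψ]
    calc |(∑ j ∈ S, (-1 : ℝ) ^ (j : ℕ) * nsq (kv j) ^ s)
        + ∑ j ∈ Sc, (-1 : ℝ) ^ (j : ℕ) * nsq (kv j) ^ s|
        ≤ |∑ j ∈ S, (-1 : ℝ) ^ (j : ℕ) * nsq (kv j) ^ s|
          + |∑ j ∈ Sc, (-1 : ℝ) ^ (j : ℕ) * nsq (kv j) ^ s| := abs_add_le _ _
      _ ≤ s * P * (A + (2 * m : ℝ) * B) + (2 * m : ℝ) * (P * B) := by
          have h1 := hhead.trans (mul_le_mul_of_nonneg_left hheadΩ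
            (mul_nonneg (by linarith) hXs))
          linarith
  have hkey : s * (A + (2 * m : ℝ) * B) + (2 * m : ℝ) * B
      ≤ (8 * (m : ℝ) + 8) * s * (A + B) := by
    nlinarith [mul_nonneg (mul_nonneg (by linarith : (0:ℝ) ≤ s) hA0)
        (by linarith : (0:ℝ) ≤ (m : ℝ)),
      mul_nonneg (sub_nonneg.2 hs) (mul_nonneg (by linarith : (0:ℝ) ≤ (m : ℝ)) hB0),
      mul_nonneg (mul_nonneg (by linarith : (0:ℝ) ≤ s) hB0)
        (by linarith : (0:ℝ) ≤ (m : ℝ)),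
      mul_nonneg (by linarith : (0:ℝ) ≤ s) hB0,
      mul_nonneg (by linarith : (0:ℝ) ≤ s) hA0]
  calc |psi s kv| ≤ s * P * (A + (2 * m : ℝ) * B) + (2 * m : ℝ) * (P * B) := hchain
    _ = P * (s * (A + (2 * m : ℝ) * B) + (2 * m : ℝ) * B) := by ring
    _ ≤ P * ((8 * (m : ℝ) + 8) * s * (A + B)) := mul_le_mul_of_nonneg_left hkey hXs
    _ = (8 * (m : ℝ) + 8) * s * P * (A + B) := by ring



end
end

section
/- Let s > 2 be real and m ≥ 2 an integer, with the configuration Λ, Ψ, ψ, Ω as in the context, and let λ₃(d) denote the third largest element of the multiset {|P|, |p₁|, …, |p_{2m−1}|}. Then there exists a constant C = C(s,m) such that for every d ∈ Λ: (i) if δ_{i′} = −ι₀, then |Ψ(d)| ≤ C ⟨P⟩^{2s−2} λ₃(d)² / |Ω(d)| whenever p_{i′} ≠ P, and |Ψ(d)| ≤ C λ₃(d)^{2s} / |Ω(d)| whenever p_{i′} = P; (ii) if δ_{i′} = ι₀, then |Ψ(d)| ≤ C ⟨P⟩^{2s−4} λ₃(d)². -/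
noncomputable section

attribute [local instance] Classical.propDecidable

/-- Japanese bracket `⟨k⟩ = (1 + |k|²)^{1/2}`. -/
def jap (k : ℤ × ℤ) : ℝ := Real.sqrt (1 + nsq k)

/-- `P = Σ_i (-1)^{i-1} q_i` (zero-based indexing). -/
def Pq {m : ℕ} (q : Fin (2 * m - 1) → ℤ × ℤ) : ℤ × ℤ :=
  ∑ i : Fin (2 * m - 1), ((-1 : ℤ) ^ (i.val)) • q i

/-- `Ω(d) = ι₀|P|² + Σ_i δ_i |p_i|²`. -/
def OmD {m : ℕ} (ι₀ : ℤ) (δ : Fin (2 * m - 1) → ℤ)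
    (d : (Fin (2 * m - 1) → ℤ × ℤ) × (Fin (2 * m - 1) → ℤ × ℤ)) : ℝ :=
  (ι₀ : ℝ) * nsq (Pq d.2) + ∑ i, (δ i : ℝ) * nsq (d.1 i)

/-- `ψ(d) = ι₀|P|^{2s} + Σ_i δ_i |p_i|^{2s}`. -/
def psiD {m : ℕ} (s : ℝ) (ι₀ : ℤ) (δ : Fin (2 * m - 1) → ℤ)
    (d : (Fin (2 * m - 1) → ℤ × ℤ) × (Fin (2 * m - 1) → ℤ × ℤ)) : ℝ :=
  (ι₀ : ℝ) * nsq (Pq d.2) ^ s + ∑ i, (δ i : ℝ) * nsq (d.1 i) ^ s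

/-- `ρ(d) = (ι₀|P|^{2s} + δ_{i′}|p_{i′}|^{2s})/(ι₀|P|² + δ_{i′}|p_{i′}|²)` when the
denominator is nonzero, and `0` otherwise. -/
def rhoD {m : ℕ} (s : ℝ) (ι₀ : ℤ) (δ : Fin (2 * m - 1) → ℤ) (i' : Fin (2 * m - 1))
    (d : (Fin (2 * m - 1) → ℤ × ℤ) × (Fin (2 * m - 1) → ℤ × ℤ)) : ℝ :=
  if (ι₀ : ℝ) * nsq (Pq d.2) + (δ i' : ℝ) * nsq (d.1 i') ≠ 0 then
    ((ι₀ : ℝ) * nsq (Pq d.2) ^ s + (δ i' : ℝ) * nsq (d.1 i') ^ s)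
      / ((ι₀ : ℝ) * nsq (Pq d.2) + (δ i' : ℝ) * nsq (d.1 i'))
  else 0

/-- `Ψ(d) = ψ(d)/Ω(d) − ρ(d)`. -/
def PsiD {m : ℕ} (s : ℝ) (ι₀ : ℤ) (δ : Fin (2 * m - 1) → ℤ) (i' : Fin (2 * m - 1))
    (d : (Fin (2 * m - 1) → ℤ × ℤ) × (Fin (2 * m - 1) → ℤ × ℤ)) : ℝ :=
  psiD s ι₀ δ d / OmD ι₀ δ d - rhoD s ι₀ δ i' d

/-- The cross-pairing singular set `Λ` (with `θ = 1/(100m)`). -/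
def inLambda {m : ℕ} (ι₀ : ℤ) (δ : Fin (2 * m - 1) → ℤ) (i' i'' : Fin (2 * m - 1))
    (d : (Fin (2 * m - 1) → ℤ × ℤ) × (Fin (2 * m - 1) → ℤ × ℤ)) : Prop :=
  (ι₀ • Pq d.2 + ∑ i, δ i • d.1 i) = 0 ∧
  OmD ι₀ δ d ≠ 0 ∧
  d.1 i' = d.2 i'' ∧
  (∑ i ∈ Finset.univ.erase i', nrm (d.1 i))
    ≤ nrm (Pq d.2) ^ (1 / (100 * (m : ℝ))) + nrm (d.1 i') ^ (1 / (100 * (m : ℝ))) ∧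
  (∑ i ∈ Finset.univ.erase i'', nrm (d.2 i))
    ≤ nrm (Pq d.2) ^ (1 / (100 * (m : ℝ))) + nrm (d.2 i'') ^ (1 / (100 * (m : ℝ)))

/-- `λ₃(d)`: the third largest element of the multiset `{|P|, |p₁|, …, |p_{2m-1}|}`. -/
def lam3 {m : ℕ}
    (d : (Fin (2 * m - 1) → ℤ × ℤ) × (Fin (2 * m - 1) → ℤ × ℤ)) : ℝ :=
  kthLargest (nrm (Pq d.2) :: List.ofFn fun i => nrm (d.1 i)) 2

namespace SAux

def phi : ℤ × ℤ →+ ℂ where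
  toFun k := (k.1 : ℝ) + (k.2 : ℝ) * Complex.I
  map_zero' := by simp
  map_add' x y := by
    show ((((x+y).1 : ℤ) : ℝ) : ℂ) + (((x+y).2 : ℤ) : ℝ) * Complex.I = _
    simp only [Prod.fst_add, Prod.snd_add]
    push_cast
    ring

lemma nsq_eq_normSq (k : ℤ × ℤ) : nsq k = Complex.normSq (phi k) := by
  show nsq k = Complex.normSq ((((k.1 : ℤ) : ℝ) : ℂ) + (((k.2 : ℤ) : ℝ) : ℂ) * Complex.I)
  rw [Complex.normSq_add_mul_I]
  rfl

lemma nrm_eq_norm (k : ℤ × ℤ) : nrm k = ‖phi k‖ := by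
  rw [nrm, nsq_eq_normSq, ← Complex.norm_def]

lemma nsq_nonneg (k : ℤ × ℤ) : 0 ≤ nsq k := by unfold nsq; positivity

lemma nrm_nonneg (k : ℤ × ℤ) : 0 ≤ nrm k := Real.sqrt_nonneg _

lemma nrm_sq (k : ℤ × ℤ) : nrm k ^ 2 = nsq k := Real.sq_sqrt (nsq_nonneg k)

lemma nsq_int (k : ℤ × ℤ) : nsq k = ((k.1 ^ 2 + k.2 ^ 2 : ℤ) : ℝ) := by
  simp [nsq]

lemma nrm_eq_zero {k : ℤ × ℤ} (h : nrm k = 0) : k = 0 := by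
  have h2 : nsq k = 0 := by
    have := nrm_sq k; rw [h] at this; linarith [this]
  have h1 : (k.1 : ℝ) ^ 2 + (k.2 : ℝ) ^ 2 = 0 := h2
  have : (k.1 : ℝ) = 0 ∧ (k.2 : ℝ) = 0 := by constructor <;> nlinarith [sq_nonneg (k.1 : ℝ), sq_nonneg (k.2 : ℝ)]
  have e1 : k.1 = 0 := by exact_mod_cast this.1
  have e2 : k.2 = 0 := by exact_mod_cast this.2
  exact Prod.ext e1 e2

lemma one_le_nrm {k : ℤ × ℤ} (h : k ≠ 0) : 1 ≤ nrm k := by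
  have h1 : (1 : ℤ) ≤ k.1 ^ 2 + k.2 ^ 2 := by
    rcases eq_or_ne k.1 0 with h1 | h1
    · have h2 : k.2 ≠ 0 := by
        intro h2; exact h (Prod.ext h1 h2)
      nlinarith [sq_nonneg k.1, Int.one_le_abs h2, sq_abs k.2, sq_nonneg (|k.2| - 1)]
    · nlinarith [sq_nonneg k.2, Int.one_le_abs h1, sq_abs k.1, sq_nonneg (|k.1| - 1)]
  have : (1 : ℝ) ≤ nsq k := by rw [nsq_int]; exact_mod_cast h1
  calc (1:ℝ) = Real.sqrt 1 := by simp
  _ ≤ nrm k := Real.sqrt_le_sqrt this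

lemma nrm_zero_or_one_le (k : ℤ × ℤ) : nrm k = 0 ∨ 1 ≤ nrm k := by
  rcases eq_or_ne k 0 with h | h
  · left; simp [h, nrm, nsq]
  · right; exact one_le_nrm h

lemma nrm_sum_le {α : Type*} (t : Finset α) (f : α → ℤ × ℤ) :
    nrm (∑ i ∈ t, f i) ≤ ∑ i ∈ t, nrm (f i) := by
  rw [nrm_eq_norm, map_sum]
  refine (norm_sum_le _ _).trans_eq ?_
  simp [nrm_eq_norm]

lemma nrm_zsmul (n : ℤ) (k : ℤ × ℤ) : nrm (n • k) = |(n : ℝ)| * nrm k := by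
  rw [nrm_eq_norm, map_zsmul, nrm_eq_norm]
  rw [zsmul_eq_mul]
  push_cast
  rw [norm_mul]
  simp [Complex.norm_real]

lemma nrm_neg_one_pow_smul (i : ℕ) (k : ℤ × ℤ) : nrm (((-1 : ℤ) ^ i) • k) = nrm k := by
  rw [nrm_zsmul]
  have : |((((-1:ℤ)) ^ i : ℤ) : ℝ)| = 1 := by
    push_cast
    rw [abs_pow, abs_neg, abs_one, one_pow]
  rw [this, one_mul]



/-- MVT bound: for `0 ≤ y ≤ x` and `1 ≤ s`, `x^s - y^s ≤ s * x^(s-1) * (x - y)`. -/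
lemma rpow_sub_rpow_le {s x y : ℝ} (hs : 1 ≤ s) (hy : 0 ≤ y) (hxy : y ≤ x) :
    x ^ s - y ^ s ≤ s * x ^ (s - 1) * (x - y) := by
  rcases eq_or_lt_of_le hxy with h | h
  · rw [h, sub_self, sub_self, mul_zero]
  · have hcont : ContinuousOn (fun t : ℝ => t ^ s) (Set.Icc y x) := by
      intro t _
      exact (Real.continuousAt_rpow_const t s (Or.inr (by linarith))).continuousWithinAt
    have hderiv : ∀ t ∈ Set.Ioo y x, HasDerivAt (fun t : ℝ => t ^ s) (s * t ^ (s - 1)) t := by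
      intro t _
      exact Real.hasDerivAt_rpow_const (Or.inr hs)
    obtain ⟨c, hc, hceq⟩ := exists_hasDerivAt_eq_slope (fun t : ℝ => t ^ s)
      (fun t => s * t ^ (s - 1)) h hcont hderiv
    have hc0 : 0 ≤ c := le_of_lt (lt_of_le_of_lt hy hc.1)
    have hcx : c ≤ x := le_of_lt hc.2
    have hkey : x ^ s - y ^ s = s * c ^ (s - 1) * (x - y) := by
      have hne : x - y ≠ 0 := sub_ne_zero.mpr (ne_of_gt h)
      rw [eq_div_iff hne] at hceq
      linarith [hceq]
    rw [hkey]
    have : c ^ (s - 1) ≤ x ^ (s - 1) := Real.rpow_le_rpow hc0 hcx (by linarith)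
    have hs0 : (0:ℝ) ≤ s := by linarith
    exact mul_le_mul_of_nonneg_right (mul_le_mul_of_nonneg_left this hs0) (sub_nonneg.mpr hxy)

/-- `|x^s - y^s| ≤ s * max x y ^ (s-1) * |x - y|` for nonneg `x y`. -/
lemma abs_rpow_sub_rpow_le {s x y : ℝ} (hs : 1 ≤ s) (hx : 0 ≤ x) (hy : 0 ≤ y) :
    |x ^ s - y ^ s| ≤ s * (max x y) ^ (s - 1) * |x - y| := by
  rcases le_total y x with h | h
  · have h1 : y ^ s ≤ x ^ s := Real.rpow_le_rpow hy h (by linarith)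
    rw [max_eq_left h, abs_of_nonneg (sub_nonneg.mpr h1), abs_of_nonneg (sub_nonneg.mpr h)]
    exact rpow_sub_rpow_le hs hy h
  · have h1 : x ^ s ≤ y ^ s := Real.rpow_le_rpow hx h (by linarith)
    rw [max_eq_right h, abs_sub_comm, abs_sub_comm x y,
      abs_of_nonneg (sub_nonneg.mpr h1), abs_of_nonneg (sub_nonneg.mpr h)]
    exact rpow_sub_rpow_le hs hx h

/-- `x^t ≤ 1 + √x` for `0 ≤ x`, `0 < t ≤ 1/2`. -/
lemma rpow_small_le {x t : ℝ} (hx : 0 ≤ x) (ht : 0 < t) (ht2 : t ≤ 1/2) :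
    x ^ t ≤ 1 + Real.sqrt x := by
  rcases le_total x 1 with h | h
  · have := Real.rpow_le_one hx h ht.le
    have := Real.sqrt_nonneg x
    linarith
  · have h1 : x ^ t ≤ x ^ (1/2 : ℝ) := Real.rpow_le_rpow_of_exponent_le h ht2
    rw [← Real.sqrt_eq_rpow] at h1
    linarith


lemma sorted_getD_ge (x : ℝ) (p : ℝ → Bool) (hp : ∀ v, p v = true ↔ x ≤ v) :
    ∀ (l : List ℝ) (i : ℕ), l.Pairwise (fun a b => b ≤ a) →
      i + 1 ≤ (l.filter p).length → x ≤ l.getD i 0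
  | [], i, _, h => by simp at h
  | (a :: t), i, hpw, h => by
    by_cases hxa : x ≤ a
    · cases i with
      | zero => simpa using hxa
      | succ n =>
        have ht : n + 1 ≤ (t.filter p).length := by
          rw [List.filter_cons, if_pos ((hp a).mpr hxa)] at h
          simpa using h
        have := sorted_getD_ge x p hp t n (List.Pairwise.of_cons hpw) ht
        simpa using this
    · exfalso
      have hnil : (a :: t).filter p = [] := by
        rw [List.filter_eq_nil_iff]
        intro b hb hpb
        have hxb : x ≤ b := (hp b).mp hpb
        rcases List.mem_cons.mp hb with rfl | hb'
        · exact hxa hxb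
        · exact hxa (le_trans hxb (List.rel_of_pairwise_cons hpw hb'))
      rw [hnil] at h
      simp at h

lemma kth_ge (l : List ℝ) (x : ℝ) (h : 3 ≤ l.countP (fun v => decide (x ≤ v))) :
    x ≤ kthLargest l 2 := by
  unfold kthLargest
  set le : ℝ → ℝ → Bool := fun a b => decide (b ≤ a) with hle
  have htrans : ∀ a b c : ℝ, le a b = true → le b c = true → le a c = true := by
    intro a b c hab hbc
    simp only [hle, decide_eq_true_eq] at *
    exact le_trans hbc hab
  have htotal : ∀ a b : ℝ, (le a b || le b a) = true := by
    intro a b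
    simp only [hle, Bool.or_eq_true, decide_eq_true_eq]
    exact le_total b a
  have hsorted := List.pairwise_mergeSort htrans htotal l
  have hpw : (l.mergeSort le).Pairwise (fun a b => b ≤ a) := by
    refine hsorted.imp ?_
    intro a b hab
    simpa [hle] using hab
  have hcount : 3 ≤ (l.mergeSort le).countP (fun v => decide (x ≤ v)) := by
    rwa [(List.mergeSort_perm l le).countP_eq]
  apply sorted_getD_ge x (fun v => decide (x ≤ v)) (fun v => by simp) _ 2 hpw
  rw [← List.countP_eq_length_filter]
  exact hcount

lemma kth_mem (l : List ℝ) (h : 2 < l.length) : kthLargest l 2 ∈ l := by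
  unfold kthLargest
  have hlen : 2 < (l.mergeSort fun a b => decide (b ≤ a)).length := by
    rwa [(List.mergeSort_perm l _).length_eq]
  rw [List.getD_eq_getElem _ _ hlen]
  exact (List.mergeSort_perm l _).mem_iff.mp (List.getElem_mem hlen)

lemma lam3_ge {m : ℕ} (d : (Fin (2 * m - 1) → ℤ × ℤ) × (Fin (2 * m - 1) → ℤ × ℤ))
    (x : ℝ) (h0 : x ≤ nrm (Pq d.2)) (j k : Fin (2 * m - 1)) (hjk : j ≠ k)
    (hj : x ≤ nrm (d.1 j)) (hk : x ≤ nrm (d.1 k)) : x ≤ lam3 d := by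
  apply kth_ge
  rw [List.countP_cons]
  have h2 : 2 ≤ List.countP (fun v => decide (x ≤ v)) (List.ofFn fun i => nrm (d.1 i)) := by
    rw [List.ofFn_eq_map, List.countP_map]
    rw [List.countP_eq_length_filter]
    have hnd : ([j, k] : List (Fin (2 * m - 1))).Nodup := by simp [hjk]
    have hsub : ([j, k] : List (Fin (2 * m - 1))) ⊆
        (List.finRange (2 * m - 1)).filter
          ((fun v => decide (x ≤ v)) ∘ fun i => nrm (d.1 i)) := by
      intro i hi
      rw [List.mem_filter]
      refine ⟨List.mem_finRange i, ?_⟩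
      rcases List.mem_cons.mp hi with rfl | hi'
      · simpa using hj
      · rcases List.mem_cons.mp hi' with rfl | h'
        · simpa using hk
        · simp at h'
    have := (List.subperm_of_subset hnd hsub).length_le
    simpa using this
  simp only [decide_eq_true_eq]
  rw [if_pos h0]
  omega

lemma lam3_mem {m : ℕ} (hm : 2 ≤ m)
    (d : (Fin (2 * m - 1) → ℤ × ℤ) × (Fin (2 * m - 1) → ℤ × ℤ)) :
    lam3 d = nrm (Pq d.2) ∨ ∃ i, lam3 d = nrm (d.1 i) := by
  have hlen : 2 < (nrm (Pq d.2) :: List.ofFn fun i => nrm (d.1 i)).length := by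
    simp only [List.length_cons, List.length_ofFn]
    omega
  have := kth_mem _ hlen
  rcases List.mem_cons.mp this with h | h
  · exact Or.inl h
  · rcases Set.mem_range.mp (List.mem_ofFn.mp h) with ⟨i, hi⟩
    exact Or.inr ⟨i, hi.symm⟩

lemma lam3_zero_or_one_le {m : ℕ} (hm : 2 ≤ m)
    (d : (Fin (2 * m - 1) → ℤ × ℤ) × (Fin (2 * m - 1) → ℤ × ℤ)) :
    lam3 d = 0 ∨ 1 ≤ lam3 d := by
  rcases lam3_mem hm d with h | ⟨i, h⟩
  · rw [h]; exact nrm_zero_or_one_le _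
  · rw [h]; exact nrm_zero_or_one_le _

lemma lam3_nonneg {m : ℕ} (hm : 2 ≤ m)
    (d : (Fin (2 * m - 1) → ℤ × ℤ) × (Fin (2 * m - 1) → ℤ × ℤ)) :
    0 ≤ lam3 d := by
  rcases lam3_mem hm d with h | ⟨i, h⟩ <;> rw [h] <;> exact nrm_nonneg _


lemma nsq_zero : nsq (0 : ℤ × ℤ) = 0 := by simp [nsq]

lemma nrm_add_le (x y : ℤ × ℤ) : nrm (x + y) ≤ nrm x + nrm y := by
  rw [nrm_eq_norm, nrm_eq_norm, nrm_eq_norm, map_add]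
  exact norm_add_le _ _

lemma abs_nrm_sub_nrm_le (x y : ℤ × ℤ) : |nrm x - nrm y| ≤ nrm (x - y) := by
  rw [nrm_eq_norm, nrm_eq_norm, nrm_eq_norm, map_sub]
  exact abs_norm_sub_norm_le _ _

lemma sqrt_le_self' {x : ℝ} (hx : 1 ≤ x) : Real.sqrt x ≤ x := by
  nlinarith [Real.sq_sqrt (by linarith : (0:ℝ) ≤ x), Real.sqrt_nonneg x,
    Real.one_le_sqrt.mpr hx]

lemma rpow_le_mul_rpow {x M s : ℝ} (hx : 0 ≤ x) (hxM : x ≤ M) (hs : 1 ≤ s) :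
    x ^ s ≤ x * M ^ (s - 1) := by
  rcases eq_or_lt_of_le hx with h | h
  · rw [← h, Real.zero_rpow (by linarith), zero_mul]
  · have : x ^ s = x ^ (1 : ℝ) * x ^ (s - 1) := by
      rw [← Real.rpow_add h]; norm_num
    rw [this, Real.rpow_one]
    have : x ^ (s - 1) ≤ M ^ (s - 1) := Real.rpow_le_rpow hx hxM (by linarith)
    nlinarith [Real.rpow_nonneg hx (s - 1)]

lemma core_eq {ω A Aψ R Rψ : ℝ} (hω : ω = A + R) (hωne : ω ≠ 0) (hA : A ≠ 0) :
    (Aψ + Rψ) / ω - Aψ / A = (Rψ * A - Aψ * R) / (ω * A) := by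
  subst hω
  field_simp
  ring

lemma core {ω A Aψ R Rψ Q : ℝ} (hω : ω = A + R) (hωne : ω ≠ 0) (hA : A ≠ 0)
    (hQA : |Aψ| ≤ Q * |A|) :
    |(Aψ + Rψ) / ω - Aψ / A| ≤ (|Rψ| + Q * |R|) / |ω| := by
  rw [core_eq hω hωne hA, abs_div, abs_mul]
  have hApos : 0 < |A| := abs_pos.mpr hA
  have hωpos : 0 < |ω| := abs_pos.mpr hωne
  have h1 : |Rψ * A - Aψ * R| ≤ (|Rψ| + Q * |R|) * |A| := by
    have htri : |Rψ * A - Aψ * R| ≤ |Rψ * A| + |Aψ * R| := abs_sub _ _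
    rw [abs_mul, abs_mul] at htri
    nlinarith [abs_nonneg R, abs_nonneg Rψ, mul_le_mul_of_nonneg_right hQA (abs_nonneg R)]
  rw [div_le_div_iff₀ (by positivity) hωpos]
  nlinarith [mul_le_mul_of_nonneg_right h1 hωpos.le]


lemma sqrt_le_half {x : ℝ} (h : 4 ≤ x) : Real.sqrt x ≤ x / 2 := by
  have h0 : (0:ℝ) ≤ x := by linarith
  have h2 : (2:ℝ) ≤ Real.sqrt x := by
    rw [show (2:ℝ) = Real.sqrt 4 by
      rw [show (4:ℝ) = 2 ^ 2 by norm_num, Real.sqrt_sq (by norm_num : (0:ℝ) ≤ 2)]]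
    exact Real.sqrt_le_sqrt h
  nlinarith [Real.sq_sqrt h0]

lemma sqrt_le_centi {x : ℝ} (h : 10000 ≤ x) : Real.sqrt x ≤ x / 100 := by
  have h0 : (0:ℝ) ≤ x := by linarith
  have h2 : (100:ℝ) ≤ Real.sqrt x := by
    rw [show (100:ℝ) = Real.sqrt 10000 by
      rw [show (10000:ℝ) = 100 ^ 2 by norm_num, Real.sqrt_sq (by norm_num : (0:ℝ) ≤ 100)]]
    exact Real.sqrt_le_sqrt h
  nlinarith [Real.sq_sqrt h0]

lemma sqrt8_le_3 : Real.sqrt 8 ≤ 3 := by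
  rw [show (3:ℝ) = Real.sqrt 9 by
    rw [show (9:ℝ) = 3 ^ 2 by norm_num, Real.sqrt_sq (by norm_num : (0:ℝ) ≤ 3)]]
  exact Real.sqrt_le_sqrt (by norm_num)

lemma rpow_two_mul {x : ℝ} (hx : 0 ≤ x) (t : ℝ) : x ^ (2 * t) = (x ^ 2) ^ t := by
  rw [Real.rpow_mul hx 2 t]
  congr 1
  rw [show (2:ℝ) = ((2:ℕ):ℝ) by norm_num, Real.rpow_natCast]

end SAux

open SAux

/-- Pointwise bounds on `Ψ` over the cross-pairing singular set `Λ`. -/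
theorem statement13 (s : ℝ) (hs : 2 < s) (m : ℕ) (hm : 2 ≤ m)
    (ι₀ : ℤ) (hι₀ : ι₀ = 1 ∨ ι₀ = -1)
    (δ : Fin (2 * m - 1) → ℤ) (hδ : ∀ i, δ i = 1 ∨ δ i = -1)
    (hcount : ((if ι₀ = 1 then 1 else 0)
        + (Finset.univ.filter fun i : Fin (2 * m - 1) => δ i = 1).card) = m)
    (i' i'' : Fin (2 * m - 1)) (hii : δ i' = -(ι₀ * (-1 : ℤ) ^ (i''.val))) :
    ∃ C : ℝ, ∀ d : (Fin (2 * m - 1) → ℤ × ℤ) × (Fin (2 * m - 1) → ℤ × ℤ),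
      inLambda ι₀ δ i' i'' d →
      ((δ i' = -ι₀ →
          (d.1 i' ≠ Pq d.2 →
            |PsiD s ι₀ δ i' d| ≤ C * jap (Pq d.2) ^ (2 * s - 2) * lam3 d ^ 2 / |OmD ι₀ δ d|) ∧
          (d.1 i' = Pq d.2 →
            |PsiD s ι₀ δ i' d| ≤ C * lam3 d ^ (2 * s) / |OmD ι₀ δ d|)) ∧
        (δ i' = ι₀ →
          |PsiD s ι₀ δ i' d| ≤ C * jap (Pq d.2) ^ (2 * s - 4) * lam3 d ^ 2)) := by
  classical
  set K : ℝ := (6400000000 : ℝ) ^ s with hKdef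
  set C : ℝ := (2 * (m : ℝ) + 16) * (1 + s) * K * 10 ^ 10 with hCdef
  have hs0 : (0:ℝ) ≤ s := by linarith
  have hs1 : (1:ℝ) ≤ s := by linarith
  have hsne : s ≠ 0 := by linarith
  have hm2 : (2:ℝ) ≤ (m:ℝ) := by exact_mod_cast hm
  have hK1 : (1:ℝ) ≤ K := Real.one_le_rpow (by norm_num) hs0
  have hK0 : (0:ℝ) ≤ K := by linarith
  have hC0 : (0:ℝ) ≤ C := by
    have := mul_nonneg (mul_nonneg (by linarith : (0:ℝ) ≤ 2 * (m:ℝ) + 16)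
      (by linarith : (0:ℝ) ≤ 1 + s)) hK0
    rw [hCdef]; positivity
  refine ⟨C, ?_⟩
  intro d hd
  obtain ⟨hmom, hΩne, hpq, hpbound, hqbound⟩ := hd
  set θ : ℝ := 1 / (100 * (m : ℝ)) with hθdef
  have h100m : (0:ℝ) < 100 * (m:ℝ) := by linarith
  have hθpos : 0 < θ := by rw [hθdef]; positivity
  have hθhalf : θ ≤ 1 / 2 := by
    rw [hθdef, div_le_div_iff₀ h100m (by norm_num)]
    linarith
  have hθlt1 : θ < 1 := by linarith
  set P : ℤ × ℤ := Pq d.2 with hPdef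
  set a : ℝ := nsq P with hadef
  set b : ℝ := nsq (d.1 i') with hbdef
  set N : ℝ := nrm P with hNdef
  set B : ℝ := nrm (d.1 i') with hBdef
  set J : ℝ := jap P with hJdef
  set lb : ℝ := lam3 d with hlbdef
  set E : Finset (Fin (2 * m - 1)) := Finset.univ.erase i' with hEdef
  set σ : ℝ := ∑ i ∈ E, nrm (d.1 i) with hσdef
  set A : ℝ := (ι₀ : ℝ) * a + (δ i' : ℝ) * b with hAdef
  set Aψ : ℝ := (ι₀ : ℝ) * a ^ s + (δ i' : ℝ) * b ^ s with hAψdef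
  set R : ℝ := ∑ i ∈ E, (δ i : ℝ) * nsq (d.1 i) with hRdef
  set Rψ : ℝ := ∑ i ∈ E, (δ i : ℝ) * nsq (d.1 i) ^ s with hRψdef
  set Sr : ℝ := ∑ i ∈ E, nsq (d.1 i) with hSrdef
  set Srψ : ℝ := ∑ i ∈ E, nsq (d.1 i) ^ s with hSrψdef
  have hι₀abs : |(ι₀ : ℝ)| = 1 := by rcases hι₀ with h | h <;> rw [h] <;> norm_num
  have hι₀ne : (ι₀ : ℝ) ≠ 0 := by rcases hι₀ with h | h <;> rw [h] <;> norm_num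
  have hδabs : ∀ i, |(δ i : ℝ)| = 1 := by
    intro i; rcases hδ i with h | h <;> rw [h] <;> norm_num
  have hδne : ∀ i, (δ i : ℝ) ≠ 0 := by
    intro i; rcases hδ i with h | h <;> rw [h] <;> norm_num
  have hΩdef : OmD ι₀ δ d = A + R := by
    simp only [OmD]
    rw [← Finset.add_sum_erase Finset.univ (fun i => (δ i : ℝ) * nsq (d.1 i))
      (Finset.mem_univ i')]
    rw [hAdef, hRdef, hadef, hbdef, hPdef, hEdef]
    ring
  have hψdef : psiD s ι₀ δ d = Aψ + Rψ := by
    simp only [psiD]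
    rw [← Finset.add_sum_erase Finset.univ (fun i => (δ i : ℝ) * nsq (d.1 i) ^ s)
      (Finset.mem_univ i')]
    rw [hAψdef, hRψdef, hadef, hbdef, hPdef, hEdef]
    ring
  have hρpos : A ≠ 0 → rhoD s ι₀ δ i' d = Aψ / A := by
    intro h
    have h' : (ι₀ : ℝ) * nsq (Pq d.2) + (δ i' : ℝ) * nsq (d.1 i') ≠ 0 := by
      rw [← hPdef, ← hadef, ← hbdef, ← hAdef]; exact h
    simp only [rhoD, if_pos h']
    rfl
  have hρzero : A = 0 → rhoD s ι₀ δ i' d = 0 := by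
    intro h
    have h' : ¬ ((ι₀ : ℝ) * nsq (Pq d.2) + (δ i' : ℝ) * nsq (d.1 i') ≠ 0) := by
      rw [← hPdef, ← hadef, ← hbdef, ← hAdef]
      simpa using h
    simp only [rhoD, if_neg h']
  have ha0 : 0 ≤ a := nsq_nonneg _
  have hb0 : 0 ≤ b := nsq_nonneg _
  have hN0 : 0 ≤ N := nrm_nonneg _
  have hB0 : 0 ≤ B := nrm_nonneg _
  have haN : N ^ 2 = a := nrm_sq _
  have hbB : B ^ 2 = b := nrm_sq _
  have hJ2 : J ^ 2 = 1 + a := by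
    rw [hJdef, jap, ← hadef]
    exact Real.sq_sqrt (by linarith only [ha0])
  have hJ1 : 1 ≤ J := by
    rw [hJdef, jap, ← hadef]
    exact Real.one_le_sqrt.mpr (by linarith only [ha0])
  have hJ0 : (0:ℝ) < J := by linarith only [hJ1]
  have hNJ : N ≤ J := by
    rw [hNdef, hJdef, nrm, jap, ← hadef]
    exact Real.sqrt_le_sqrt (by linarith only [ha0])
  -- integrality
  have hΩint : 1 ≤ |OmD ι₀ δ d| := by
    have hz : OmD ι₀ δ d = ((ι₀ * ((Pq d.2).1 ^ 2 + (Pq d.2).2 ^ 2)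
        + ∑ i, δ i * ((d.1 i).1 ^ 2 + (d.1 i).2 ^ 2) : ℤ) : ℝ) := by
      simp only [OmD, nsq]
      push_cast
      ring
    rw [hz, ← Int.cast_abs]
    have hne : (ι₀ * ((Pq d.2).1 ^ 2 + (Pq d.2).2 ^ 2)
        + ∑ i, δ i * ((d.1 i).1 ^ 2 + (d.1 i).2 ^ 2) : ℤ) ≠ 0 := by
      intro h
      apply hΩne
      rw [hz, h]
      norm_num
    exact_mod_cast Int.one_le_abs hne
  have hAint : A ≠ 0 → 1 ≤ |A| := by
    intro hA
    have hz : A = ((ι₀ * (P.1 ^ 2 + P.2 ^ 2)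
        + δ i' * ((d.1 i').1 ^ 2 + (d.1 i').2 ^ 2) : ℤ) : ℝ) := by
      rw [hAdef, hadef, hbdef]
      simp only [nsq]
      push_cast
      ring
    rw [hz, ← Int.cast_abs]
    have hne : (ι₀ * (P.1 ^ 2 + P.2 ^ 2)
        + δ i' * ((d.1 i').1 ^ 2 + (d.1 i').2 ^ 2) : ℤ) ≠ 0 := by
      intro h
      apply hA
      rw [hz, h]
      norm_num
    exact_mod_cast Int.one_le_abs hne
  -- q-side comparison
  have hQbd : |N - B| ≤ N ^ θ + B ^ θ := by
    have hsplit : P = ((-1 : ℤ) ^ (i''.val)) • d.2 i''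
        + ∑ i ∈ Finset.univ.erase i'', ((-1 : ℤ) ^ (i.val)) • d.2 i := by
      rw [hPdef, Pq, ← Finset.add_sum_erase Finset.univ
        (fun i => ((-1 : ℤ) ^ (i.val)) • d.2 i) (Finset.mem_univ i'')]
    have h4 : nrm (((-1 : ℤ) ^ (i''.val)) • d.2 i'') = B := by
      rw [nrm_neg_one_pow_smul, ← hpq, ← hBdef]
    have h2 : P - ((-1 : ℤ) ^ (i''.val)) • d.2 i''
        = ∑ i ∈ Finset.univ.erase i'', ((-1 : ℤ) ^ (i.val)) • d.2 i := by
      rw [hsplit]; abel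
    have h3 : nrm (∑ i ∈ Finset.univ.erase i'', ((-1 : ℤ) ^ (i.val)) • d.2 i)
        ≤ ∑ i ∈ Finset.univ.erase i'', nrm (d.2 i) := by
      refine (nrm_sum_le _ _).trans (le_of_eq ?_)
      exact Finset.sum_congr rfl fun i _ => nrm_neg_one_pow_smul _ _
    have h5 : nrm (d.2 i'') = B := by rw [← hpq, ← hBdef]
    calc |N - B| = |nrm P - nrm (((-1 : ℤ) ^ (i''.val)) • d.2 i'')| := by
          rw [h4, ← hNdef]
    _ ≤ nrm (P - ((-1 : ℤ) ^ (i''.val)) • d.2 i'') := abs_nrm_sub_nrm_le _ _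
    _ = nrm (∑ i ∈ Finset.univ.erase i'', ((-1 : ℤ) ^ (i.val)) • d.2 i) := by rw [h2]
    _ ≤ ∑ i ∈ Finset.univ.erase i'', nrm (d.2 i) := h3
    _ ≤ N ^ θ + nrm (d.2 i'') ^ θ := hqbound
    _ = N ^ θ + B ^ θ := by rw [h5]
  -- p-side sums
  have hσbd : σ ≤ N ^ θ + B ^ θ := hpbound
  have hσ0 : 0 ≤ σ := Finset.sum_nonneg fun i _ => nrm_nonneg _
  have hsm : ∀ j ∈ E, nrm (d.1 j) ≤ σ := fun j hj =>
    Finset.single_le_sum (fun i _ => nrm_nonneg (d.1 i)) hj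
  have hSr0 : 0 ≤ Sr := Finset.sum_nonneg fun i _ => nsq_nonneg _
  have hSrψ0 : 0 ≤ Srψ := Finset.sum_nonneg fun i _ => Real.rpow_nonneg (nsq_nonneg _) s
  have hSrσ : Sr ≤ σ ^ 2 := by
    rw [hSrdef]
    calc ∑ i ∈ E, nsq (d.1 i) = ∑ i ∈ E, nrm (d.1 i) ^ 2 :=
          Finset.sum_congr rfl fun i _ => (nrm_sq _).symm
    _ ≤ ∑ i ∈ E, nrm (d.1 i) * σ := by
        refine Finset.sum_le_sum fun i hi => ?_
        rw [pow_two]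
        exact mul_le_mul_of_nonneg_left (hsm i hi) (nrm_nonneg _)
    _ = σ * σ := by rw [← Finset.sum_mul, ← hσdef]
    _ = σ ^ 2 := by ring
  have hRabs : |R| ≤ Sr := by
    rw [hRdef, hSrdef]
    refine (Finset.abs_sum_le_sum_abs _ _).trans ?_
    refine Finset.sum_le_sum fun i hi => ?_
    rw [abs_mul, hδabs i, one_mul, abs_of_nonneg (nsq_nonneg _)]
  have hRψabs : |Rψ| ≤ Srψ := by
    rw [hRψdef, hSrψdef]
    refine (Finset.abs_sum_le_sum_abs _ _).trans ?_
    refine Finset.sum_le_sum fun i hi => ?_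
    rw [abs_mul, hδabs i, one_mul, abs_of_nonneg (Real.rpow_nonneg (nsq_nonneg _) s)]
  have hcardE : (E.card : ℝ) ≤ 2 * m := by
    have h1 : E.card = 2 * m - 1 - 1 := by
      rw [hEdef, Finset.card_erase_of_mem (Finset.mem_univ i'), Finset.card_univ,
        Fintype.card_fin]
    have h2 : E.card ≤ 2 * m := by omega
    exact_mod_cast h2
  -- norm comparability
  have hNθ : N ^ θ ≤ 1 + Real.sqrt N := rpow_small_le hN0 hθpos hθhalf
  have hBθ : B ^ θ ≤ 1 + Real.sqrt B := rpow_small_le hB0 hθpos hθhalf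
  have hsqNJ : Real.sqrt N ≤ J := by
    refine (Real.sqrt_le_sqrt hNJ).trans (sqrt_le_self' hJ1)
  have hB8J : B ≤ 8 * J := by
    have h1 : B - N ≤ |N - B| := by
      rw [abs_sub_comm]
      exact le_abs_self _
    rcases le_total B 4 with h | h
    · linarith only [hJ1, h]
    · have h2 := sqrt_le_half h
      linarith only [h1, hQbd, hNθ, hBθ, hsqNJ, hNJ, h2, hJ1]
  have hsqBJ : Real.sqrt B ≤ 3 * Real.sqrt J := by
    calc Real.sqrt B ≤ Real.sqrt (8 * J) := Real.sqrt_le_sqrt hB8J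
    _ = Real.sqrt 8 * Real.sqrt J := Real.sqrt_mul (by norm_num) _
    _ ≤ 3 * Real.sqrt J := by
        have := Real.sqrt_nonneg J
        exact mul_le_mul_of_nonneg_right sqrt8_le_3 this
  have hsqJ1 : 1 ≤ Real.sqrt J := by
    rw [show (1:ℝ) = Real.sqrt 1 by rw [Real.sqrt_one]]
    exact Real.sqrt_le_sqrt hJ1
  have hsqJJ : Real.sqrt J ≤ J := sqrt_le_self' hJ1
  have hσ6 : σ ≤ 6 * Real.sqrt J := by
    have h1 : Real.sqrt N ≤ Real.sqrt J := Real.sqrt_le_sqrt hNJ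
    linarith only [hσbd, hNθ, hBθ, h1, hsqBJ, hsqJ1]
  have haJ : a ≤ 64 * J ^ 2 := by
    have hJsq : (0:ℝ) ≤ J ^ 2 := sq_nonneg J
    linarith only [hJ2, hJsq]
  have hbJ : b ≤ 64 * J ^ 2 := by
    have h1 : B ^ 2 ≤ (8 * J) ^ 2 := pow_le_pow_left₀ hB0 hB8J 2
    have h2 : (8 * J) ^ 2 = 64 * J ^ 2 := by ring
    linarith only [h1, h2, hbB]
  -- degenerate branch
  have hPsiE : PsiD s ι₀ δ i' d = psiD s ι₀ δ d / OmD ι₀ δ d - rhoD s ι₀ δ i' d := rfl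
  by_cases hl0 : lb = 0
  · have hPsi0 : PsiD s ι₀ δ i' d = 0 := by
      by_cases hall : ∀ j ∈ E, d.1 j = 0
      · have hR0 : R = 0 := by
          rw [hRdef]
          refine Finset.sum_eq_zero fun j hj => ?_
          rw [hall j hj, nsq_zero, mul_zero]
        have hRψ0 : Rψ = 0 := by
          rw [hRψdef]
          refine Finset.sum_eq_zero fun j hj => ?_
          rw [hall j hj, nsq_zero, Real.zero_rpow hsne, mul_zero]
        have hAne : A ≠ 0 := by
          intro h
          apply hΩne
          rw [hΩdef, hR0, h, add_zero]
        rw [hPsiE, hψdef, hρpos hAne, hΩdef, hR0, hRψ0, add_zero, add_zero, sub_self]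
      · push_neg at hall
        obtain ⟨j, hjE, hjne⟩ := hall
        have hj1 : 1 ≤ nrm (d.1 j) := one_le_nrm hjne
        have hji' : j ≠ i' := by
          have := hjE
          rw [hEdef] at this
          exact (Finset.mem_erase.mp this).1
        have hlam0 : lam3 d = 0 := hlbdef.symm.trans hl0
        have hNB : N = 0 ∨ B = 0 := by
          by_contra hcon
          push_neg at hcon
          obtain ⟨hN, hB⟩ := hcon
          have hN1 : 1 ≤ N := by
            rcases nrm_zero_or_one_le P with h | h
            · exact absurd (hNdef.trans h) hN
            · exact le_of_le_of_eq h hNdef.symm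
          have hB1 : 1 ≤ B := by
            rcases nrm_zero_or_one_le (d.1 i') with h | h
            · exact absurd (hBdef.trans h) hB
            · exact le_of_le_of_eq h hBdef.symm
          have e0 : (1:ℝ) ≤ nrm (Pq d.2) := by rw [← hPdef, ← hNdef]; exact hN1
          have e1 : (1:ℝ) ≤ nrm (d.1 i') := by rw [← hBdef]; exact hB1
          have := lam3_ge d 1 e0 i' j (Ne.symm hji') e1 hj1
          linarith only [this, hlam0]
        rcases hNB with hN0' | hB0'
        · -- P = 0 case
          have hPzero : P = 0 := nrm_eq_zero (hNdef.symm.trans hN0')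
          have ha0' : a = 0 := by rw [hadef, hPzero, nsq_zero]
          have hNθ0 : N ^ θ = 0 := by rw [hN0', Real.zero_rpow (ne_of_gt hθpos)]
          have hBB : B ≤ B ^ θ := by
            have h2 := hQbd
            rw [hNθ0, hN0'] at h2
            have h1 : B ≤ |0 - B| := by rw [zero_sub, abs_neg, abs_of_nonneg hB0]
            linarith only [h2, h1]
          rcases nrm_zero_or_one_le (d.1 i') with hB0'' | hB1
          · exfalso
            have hBz : B = 0 := hBdef.trans hB0''
            have hBθ0 : B ^ θ = 0 := by rw [hBz, Real.zero_rpow (ne_of_gt hθpos)]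
            have hσz : σ ≤ 0 := by linarith only [hσbd, hNθ0, hBθ0]
            have := hsm j hjE
            linarith only [this, hσz, hj1]
          · have hB1' : 1 ≤ B := le_of_le_of_eq hB1 hBdef.symm
            have hBeq1 : B = 1 := by
              by_contra hne1
              have hlt : 1 < B := lt_of_le_of_ne hB1' (Ne.symm hne1)
              have h3 := Real.rpow_lt_rpow_of_exponent_lt hlt hθlt1
              rw [Real.rpow_one] at h3
              linarith only [h3, hBB]
            have hb1 : b = 1 := by rw [← hbB, hBeq1, one_pow]
            have hσ1 : σ ≤ 1 := by
              have hBθ1 : B ^ θ = 1 := by rw [hBeq1, Real.one_rpow]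
              linarith only [hσbd, hNθ0, hBθ1]
            have hsum : nrm (d.1 j) + ∑ k ∈ E.erase j, nrm (d.1 k) = σ := by
              rw [hσdef]
              exact Finset.add_sum_erase E (fun k => nrm (d.1 k)) hjE
            have hnn : ∀ k ∈ E.erase j, (0:ℝ) ≤ nrm (d.1 k) := fun k _ => nrm_nonneg _
            have hrest0 : ∑ k ∈ E.erase j, nrm (d.1 k) = 0 := by
              have h4 : ∑ k ∈ E.erase j, nrm (d.1 k) ≤ 0 := by
                linarith only [hsum, hσ1, hj1]
              exact le_antisymm h4 (Finset.sum_nonneg hnn)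
            have hothers : ∀ k ∈ E, k ≠ j → d.1 k = 0 := by
              intro k hk hkj
              refine nrm_eq_zero ?_
              exact (Finset.sum_eq_zero_iff_of_nonneg hnn).mp hrest0 k
                (Finset.mem_erase.mpr ⟨hkj, hk⟩)
            have hnrmj : nrm (d.1 j) = 1 := by
              have h5 : nrm (d.1 j) ≤ 1 := by
                linarith only [hsum, hσ1, Finset.sum_nonneg hnn]
              exact le_antisymm h5 hj1
            have hnsqj : nsq (d.1 j) = 1 := by rw [← nrm_sq, hnrmj, one_pow]
            have hReq : R = (δ j : ℝ) := by
              rw [hRdef, Finset.sum_eq_single_of_mem j hjE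
                (fun k hk hkj => by rw [hothers k hk hkj, nsq_zero, mul_zero]),
                hnsqj, mul_one]
            have hRψeq : Rψ = (δ j : ℝ) := by
              rw [hRψdef, Finset.sum_eq_single_of_mem j hjE
                (fun k hk hkj => by
                  rw [hothers k hk hkj, nsq_zero, Real.zero_rpow hsne, mul_zero]),
                hnsqj, Real.one_rpow, mul_one]
            have hAeq : A = (δ i' : ℝ) := by rw [hAdef, ha0', hb1]; ring
            have hAψeq : Aψ = (δ i' : ℝ) := by
              rw [hAψdef, ha0', hb1, Real.zero_rpow hsne, Real.one_rpow]; ring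
            have hAne : A ≠ 0 := by rw [hAeq]; exact hδne i'
            rw [hPsiE, hψdef, hρpos hAne, core_eq hΩdef hΩne hAne, hReq, hRψeq, hAeq, hAψeq,
              show (δ j : ℝ) * (δ i' : ℝ) - (δ i' : ℝ) * (δ j : ℝ) = 0 by ring, zero_div]
        · -- p_{i'} = 0 case
          have hpzero : d.1 i' = 0 := nrm_eq_zero (hBdef.symm.trans hB0')
          have hb0' : b = 0 := by rw [hbdef, hpzero, nsq_zero]
          have hBθ0 : B ^ θ = 0 := by rw [hB0', Real.zero_rpow (ne_of_gt hθpos)]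
          have hNN : N ≤ N ^ θ := by
            have h2 := hQbd
            rw [hBθ0, hB0'] at h2
            have h1 : N ≤ |N - 0| := by rw [sub_zero, abs_of_nonneg hN0]
            linarith only [h2, h1]
          rcases nrm_zero_or_one_le P with hN0'' | hN1
          · exfalso
            have hNz : N = 0 := hNdef.trans hN0''
            have hNθ0 : N ^ θ = 0 := by rw [hNz, Real.zero_rpow (ne_of_gt hθpos)]
            have hσz : σ ≤ 0 := by linarith only [hσbd, hNθ0, hBθ0]
            have := hsm j hjE
            linarith only [this, hσz, hj1]
          · have hN1' : 1 ≤ N := le_of_le_of_eq hN1 hNdef.symm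
            have hNeq1 : N = 1 := by
              by_contra hne1
              have hlt : 1 < N := lt_of_le_of_ne hN1' (Ne.symm hne1)
              have h3 := Real.rpow_lt_rpow_of_exponent_lt hlt hθlt1
              rw [Real.rpow_one] at h3
              linarith only [h3, hNN]
            have ha1 : a = 1 := by rw [← haN, hNeq1, one_pow]
            have hσ1 : σ ≤ 1 := by
              have hNθ1 : N ^ θ = 1 := by rw [hNeq1, Real.one_rpow]
              linarith only [hσbd, hNθ1, hBθ0]
            have hsum : nrm (d.1 j) + ∑ k ∈ E.erase j, nrm (d.1 k) = σ := by
              rw [hσdef]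
              exact Finset.add_sum_erase E (fun k => nrm (d.1 k)) hjE
            have hnn : ∀ k ∈ E.erase j, (0:ℝ) ≤ nrm (d.1 k) := fun k _ => nrm_nonneg _
            have hrest0 : ∑ k ∈ E.erase j, nrm (d.1 k) = 0 := by
              have h4 : ∑ k ∈ E.erase j, nrm (d.1 k) ≤ 0 := by
                linarith only [hsum, hσ1, hj1]
              exact le_antisymm h4 (Finset.sum_nonneg hnn)
            have hothers : ∀ k ∈ E, k ≠ j → d.1 k = 0 := by
              intro k hk hkj
              refine nrm_eq_zero ?_
              exact (Finset.sum_eq_zero_iff_of_nonneg hnn).mp hrest0 k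
                (Finset.mem_erase.mpr ⟨hkj, hk⟩)
            have hnrmj : nrm (d.1 j) = 1 := by
              have h5 : nrm (d.1 j) ≤ 1 := by
                linarith only [hsum, hσ1, Finset.sum_nonneg hnn]
              exact le_antisymm h5 hj1
            have hnsqj : nsq (d.1 j) = 1 := by rw [← nrm_sq, hnrmj, one_pow]
            have hReq : R = (δ j : ℝ) := by
              rw [hRdef, Finset.sum_eq_single_of_mem j hjE
                (fun k hk hkj => by rw [hothers k hk hkj, nsq_zero, mul_zero]),
                hnsqj, mul_one]
            have hRψeq : Rψ = (δ j : ℝ) := by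
              rw [hRψdef, Finset.sum_eq_single_of_mem j hjE
                (fun k hk hkj => by
                  rw [hothers k hk hkj, nsq_zero, Real.zero_rpow hsne, mul_zero]),
                hnsqj, Real.one_rpow, mul_one]
            have hAeq : A = (ι₀ : ℝ) := by rw [hAdef, ha1, hb0']; ring
            have hAψeq : Aψ = (ι₀ : ℝ) := by
              rw [hAψdef, ha1, hb0', Real.zero_rpow hsne, Real.one_rpow]; ring
            have hAne : A ≠ 0 := by rw [hAeq]; exact hι₀ne
            rw [hPsiE, hψdef, hρpos hAne, core_eq hΩdef hΩne hAne, hReq, hRψeq, hAeq, hAψeq,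
              show (δ j : ℝ) * (ι₀ : ℝ) - (ι₀ : ℝ) * (δ j : ℝ) = 0 by ring, zero_div]
    rw [hPsi0, abs_zero]
    have hj2 : (0:ℝ) ≤ jap (Pq d.2) ^ (2 * s - 2) := Real.rpow_nonneg (Real.sqrt_nonneg _) _
    have hj4 : (0:ℝ) ≤ jap (Pq d.2) ^ (2 * s - 4) := Real.rpow_nonneg (Real.sqrt_nonneg _) _
    have hl2 : (0:ℝ) ≤ lb ^ 2 := sq_nonneg _
    have hl2s : (0:ℝ) ≤ lb ^ (2 * s) := Real.rpow_nonneg (by rw [hl0]) _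
    have hΩpos : (0:ℝ) < |OmD ι₀ δ d| := by linarith only [hΩint]
    refine ⟨fun _ => ⟨fun _ => ?_, fun _ => ?_⟩, fun _ => ?_⟩
    · exact div_nonneg (mul_nonneg (mul_nonneg hC0 hj2) hl2) (abs_nonneg _)
    · exact div_nonneg (mul_nonneg hC0 hl2s) (abs_nonneg _)
    · exact mul_nonneg (mul_nonneg hC0 hj4) hl2
  · have hlb1 : 1 ≤ lb := by
      rcases lam3_zero_or_one_le hm d with h | h
      · exact absurd (hlbdef.trans h) hl0
      · exact le_of_le_of_eq h hlbdef.symm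
    have hlb0 : (0:ℝ) < lb := by linarith only [hlb1]
    have hΩpos : (0:ℝ) < |OmD ι₀ δ d| := by linarith only [hΩint]
    have hsp : (0:ℝ) ≤ 1 + s := by linarith only [hs0]
    have hs3 : (3:ℝ) ≤ 1 + s := by linarith only [hs]
    have hm0 : (0:ℝ) ≤ (m:ℝ) := by linarith only [hm2]
    have h64K : (64:ℝ) ^ s ≤ K := by
      rw [hKdef]
      exact Real.rpow_le_rpow (by norm_num) (by norm_num) hs0
    have h64nn : (0:ℝ) ≤ (64:ℝ) ^ s := Real.rpow_nonneg (by norm_num) s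
    have hCform : C = K * ((1 + s) * ((2 * (m:ℝ) + 16) * 10 ^ 10)) := by rw [hCdef]; ring
    have hbase : ∀ y : ℝ, 0 ≤ y → y ≤ (1 + s) * ((2 * (m:ℝ) + 16) * 10 ^ 10) → y * K ≤ C := by
      intro y hy0 hy
      rw [hCform]
      calc y * K ≤ ((1 + s) * ((2 * (m:ℝ) + 16) * 10 ^ 10)) * K :=
            mul_le_mul_of_nonneg_right hy hK0
      _ = K * ((1 + s) * ((2 * (m:ℝ) + 16) * 10 ^ 10)) := by ring
    have hy3 : ∀ y : ℝ, y ≤ 3 * ((2 * (m:ℝ) + 16) * 10 ^ 10) →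
        y ≤ (1 + s) * ((2 * (m:ℝ) + 16) * 10 ^ 10) := by
      intro y hy
      have e2 : 3 * ((2 * (m:ℝ) + 16) * 10 ^ 10) ≤ (1 + s) * ((2 * (m:ℝ) + 16) * 10 ^ 10) :=
        mul_le_mul_of_nonneg_right hs3 (by positivity)
      linarith only [hy, e2]
    have hC1 : 2 * (m:ℝ) * 64 ^ s * (1 + s) ≤ C := by
      have h1 : 2 * (m:ℝ) * 64 ^ s * (1 + s) ≤ (2 * (m:ℝ) * (1 + s)) * K := by
        calc 2 * (m:ℝ) * 64 ^ s * (1 + s) = (2 * (m:ℝ) * (1 + s)) * 64 ^ s := by ring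
        _ ≤ (2 * (m:ℝ) * (1 + s)) * K :=
            mul_le_mul_of_nonneg_left h64K (mul_nonneg (by positivity) hsp)
      refine h1.trans (hbase _ (mul_nonneg (by positivity) hsp) ?_)
      calc 2 * (m:ℝ) * (1 + s) = (1 + s) * (2 * (m:ℝ)) := by ring
      _ ≤ (1 + s) * ((2 * (m:ℝ) + 16) * 10 ^ 10) :=
          mul_le_mul_of_nonneg_left (by linarith only [hm0]) hsp
    have hC5 : 2 * (m:ℝ) * K ≤ C := by
      refine hbase _ (by positivity) (hy3 _ ?_)
      linarith only [hm0]
    have hC2 : 2 * (m:ℝ) ≤ C := by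
      have h1 : 2 * (m:ℝ) ≤ 2 * (m:ℝ) * K := le_mul_of_one_le_right (by positivity) hK1
      linarith only [h1, hC5]
    have hC3 : 16 * (m:ℝ) * 64 ^ s ≤ C := by
      have h1 : 16 * (m:ℝ) * 64 ^ s ≤ (16 * (m:ℝ)) * K :=
        mul_le_mul_of_nonneg_left h64K (by positivity)
      refine h1.trans (hbase _ (by positivity) (hy3 _ ?_))
      linarith only [hm0]
    have hC4 : (2 * (m:ℝ) + 2) * K + 2 * K * ((2 * (m:ℝ) + 13) * 10 ^ 9) ≤ C := by
      have h1 : (2 * (m:ℝ) + 2) * K + 2 * K * ((2 * (m:ℝ) + 13) * 10 ^ 9)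
          = ((2 * (m:ℝ) + 2) + 2 * ((2 * (m:ℝ) + 13) * 10 ^ 9)) * K := by ring
      rw [h1]
      refine hbase _ (by positivity) (hy3 _ ?_)
      linarith only [hm0]
    have hC6 : (2 * (m:ℝ) + 4) * K ≤ C := by
      refine hbase _ (by positivity) (hy3 _ ?_)
      linarith only [hm0]
    have hJpow2 : (1:ℝ) ≤ J ^ (2 * s - 2) := Real.one_le_rpow hJ1 (by linarith only [hs])
    have hJpow4 : (1:ℝ) ≤ J ^ (2 * s - 4) := Real.one_le_rpow hJ1 (by linarith only [hs])
    have hlbsq1 : (1:ℝ) ≤ lb ^ 2 := by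
      have h1 : (1:ℝ) * 1 ≤ lb * lb :=
        mul_le_mul hlb1 hlb1 zero_le_one (by linarith only [hlb1])
      calc (1:ℝ) = 1 * 1 := by norm_num
      _ ≤ lb * lb := h1
      _ = lb ^ 2 := by ring
    have hexp1 : ((lb ^ 2 : ℝ)) ^ s = lb ^ (2 * s) := by
      rw [← Real.rpow_natCast lb 2, ← Real.rpow_mul (le_of_lt hlb0)]
      norm_num
    by_cases hJT : (10000:ℝ) ≤ J
    · -- BIG CASE
      have hJJ : 10000 * J ≤ J ^ 2 := by
        have h1 := mul_le_mul_of_nonneg_right hJT hJ0.le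
        calc (10000:ℝ) * J ≤ J * J := h1
        _ = J ^ 2 := by ring
      have hsqC : Real.sqrt J ≤ J / 100 := sqrt_le_centi hJT
      have hσJ4 : σ ≤ J / 4 := by linarith only [hσ6, hsqC, hJT]
      have hNJ2 : J / 2 ≤ N := by
        have h1 : (J / 2) ^ 2 ≤ a := by
          have e : (J / 2) ^ 2 = J ^ 2 / 4 := by ring
          linarith only [hJ2, hJJ, hJT, e]
        have h2 := Real.sqrt_le_sqrt h1
        rw [Real.sqrt_sq (by linarith only [hJ0] : (0:ℝ) ≤ J / 2)] at h2
        have h3 : Real.sqrt a = N := by rw [hadef, hNdef, nrm]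
        linarith only [h2, h3]
      have hBJ4 : J / 4 ≤ B := by
        by_contra hcon
        push_neg at hcon
        have h1 : N - B ≤ |N - B| := le_abs_self _
        have h2 : Real.sqrt B ≤ Real.sqrt J :=
          Real.sqrt_le_sqrt (by linarith only [hcon, hJ0])
        have h3 : Real.sqrt N ≤ Real.sqrt J := Real.sqrt_le_sqrt hNJ
        linarith only [h1, hQbd, hNθ, hBθ, h2, h3, hsqC, hNJ2, hcon, hJT]
      have hsmlb : ∀ k ∈ E, nrm (d.1 k) ≤ lb := by
        intro k hk
        have h0 : nrm (d.1 k) ≤ nrm (Pq d.2) := by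
          rw [← hPdef, ← hNdef]
          linarith only [hsm k hk, hσJ4, hNJ2, hJ0]
        have h1 : nrm (d.1 k) ≤ nrm (d.1 i') := by
          rw [← hBdef]
          linarith only [hsm k hk, hσJ4, hBJ4]
        have hki' : k ≠ i' := by
          have h5 := hk
          rw [hEdef] at h5
          exact (Finset.mem_erase.mp h5).1
        have h6 := lam3_ge d (nrm (d.1 k)) h0 i' k (Ne.symm hki') h1 (le_refl _)
        exact le_of_le_of_eq h6 hlbdef.symm
      have hnsqlb : ∀ k ∈ E, nsq (d.1 k) ≤ lb ^ 2 := by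
        intro k hk
        rw [← nrm_sq]
        exact pow_le_pow_left₀ (nrm_nonneg _) (hsmlb k hk) 2
      have hSrlb : Sr ≤ 2 * m * lb ^ 2 := by
        have h1 : Sr ≤ E.card * lb ^ 2 := by
          rw [hSrdef]
          calc ∑ i ∈ E, nsq (d.1 i) ≤ ∑ _i ∈ E, lb ^ 2 := Finset.sum_le_sum hnsqlb
          _ = E.card * lb ^ 2 := by rw [Finset.sum_const, nsmul_eq_mul]
        exact h1.trans (mul_le_mul_of_nonneg_right hcardE (sq_nonneg _))
      have hSrψlb : Srψ ≤ 2 * m * (lb ^ 2) ^ s := by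
        have h1 : Srψ ≤ E.card * (lb ^ 2) ^ s := by
          rw [hSrψdef]
          calc ∑ i ∈ E, nsq (d.1 i) ^ s ≤ ∑ _i ∈ E, (lb ^ 2) ^ s :=
                Finset.sum_le_sum fun k hk =>
                  Real.rpow_le_rpow (nsq_nonneg _) (hnsqlb k hk) hs0
          _ = E.card * (lb ^ 2) ^ s := by rw [Finset.sum_const, nsmul_eq_mul]
        exact h1.trans (mul_le_mul_of_nonneg_right hcardE
          (Real.rpow_nonneg (sq_nonneg _) s))
      have hlb8J : lb ≤ 8 * J := by
        rcases lam3_mem hm d with h | ⟨i, h⟩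
        · have h1 : lb = N := by rw [hlbdef, h, ← hPdef, ← hNdef]
          linarith only [h1, hNJ, hJ0]
        · by_cases hi : i = i'
          · have h1 : lb = B := by rw [hlbdef, h, hi, ← hBdef]
            linarith only [h1, hB8J]
          · have hiE : i ∈ E := by
              rw [hEdef]
              exact Finset.mem_erase.mpr ⟨hi, Finset.mem_univ _⟩
            have h1 : lb = nrm (d.1 i) := by rw [hlbdef, h]
            have h2 := hsm i hiE
            linarith only [h1, h2, hσJ4, hJT, hJ0]
      have hlb2s : lb ^ (2 * s) = lb ^ (2 * s - 2) * lb ^ 2 := by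
        rw [← Real.rpow_natCast lb 2, ← Real.rpow_add hlb0]
        congr 1
        push_cast
        ring
      have h8exp : (8:ℝ) ^ (2 * s) = 64 ^ s := by
        rw [rpow_two_mul (by norm_num : (0:ℝ) ≤ 8)]
        norm_num
      have h64 : (8:ℝ) ^ (2 * s - 2) ≤ 64 ^ s := by
        have h1 := Real.rpow_le_rpow_of_exponent_le (by norm_num : (1:ℝ) ≤ 8)
          (by linarith only [hs0] : 2 * s - 2 ≤ 2 * s)
        rw [h8exp] at h1
        exact h1
      have hJ2exp : ((J ^ 2 : ℝ)) ^ (s - 1) = J ^ (2 * s - 2) := by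
        rw [← rpow_two_mul hJ0.le (s - 1), show 2 * (s - 1) = 2 * s - 2 by ring]
      have hmaxQ : (max a b) ^ (s - 1) ≤ 64 ^ s * J ^ (2 * s - 2) := by
        have hmab : max a b ≤ 64 * J ^ 2 := max_le haJ hbJ
        have hmnn : 0 ≤ max a b := le_trans ha0 (le_max_left a b)
        have h5 : (max a b) ^ (s - 1) ≤ (64 * J ^ 2) ^ (s - 1) :=
          Real.rpow_le_rpow hmnn hmab (by linarith only [hs1])
        have h6 : ((64:ℝ) * J ^ 2) ^ (s - 1) = 64 ^ (s - 1) * (J ^ 2) ^ (s - 1) :=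
          Real.mul_rpow (by norm_num) (sq_nonneg J)
        have h7 : (64:ℝ) ^ (s - 1) ≤ 64 ^ s :=
          Real.rpow_le_rpow_of_exponent_le (by norm_num) (by linarith only [])
        have h8 : (0:ℝ) ≤ ((J ^ 2 : ℝ)) ^ (s - 1) := Real.rpow_nonneg (sq_nonneg J) _
        calc (max a b) ^ (s - 1) ≤ 64 ^ (s - 1) * (J ^ 2) ^ (s - 1) := by
              rw [← h6]; exact h5
        _ ≤ 64 ^ s * (J ^ 2) ^ (s - 1) := mul_le_mul_of_nonneg_right h7 h8
        _ = 64 ^ s * J ^ (2 * s - 2) := by rw [hJ2exp]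
      have hpack : ((lb ^ 2 : ℝ)) ^ s ≤ 64 ^ s * J ^ (2 * s - 2) * lb ^ 2 := by
        rw [hexp1, hlb2s]
        have h1 : lb ^ (2 * s - 2) ≤ (8 * J) ^ (2 * s - 2) :=
          Real.rpow_le_rpow (le_of_lt hlb0) hlb8J (by linarith only [hs])
        have h2 : ((8:ℝ) * J) ^ (2 * s - 2) = 8 ^ (2 * s - 2) * J ^ (2 * s - 2) :=
          Real.mul_rpow (by norm_num) (le_of_lt hJ0)
        have h3 : (8:ℝ) ^ (2 * s - 2) * J ^ (2 * s - 2) ≤ 64 ^ s * J ^ (2 * s - 2) :=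
          mul_le_mul_of_nonneg_right h64 (Real.rpow_nonneg hJ0.le _)
        have h4 : (0:ℝ) ≤ lb ^ 2 := sq_nonneg lb
        calc lb ^ (2 * s - 2) * lb ^ 2 ≤ (8 ^ (2 * s - 2) * J ^ (2 * s - 2)) * lb ^ 2 := by
              refine mul_le_mul_of_nonneg_right ?_ h4
              rw [← h2]
              exact h1
        _ ≤ (64 ^ s * J ^ (2 * s - 2)) * lb ^ 2 := mul_le_mul_of_nonneg_right h3 h4
      have hRψbd : |Rψ| ≤ 2 * m * (64 ^ s * J ^ (2 * s - 2)) * lb ^ 2 := by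
        refine hRψabs.trans (hSrψlb.trans ?_)
        calc 2 * (m:ℝ) * (lb ^ 2) ^ s ≤ 2 * (m:ℝ) * (64 ^ s * J ^ (2 * s - 2) * lb ^ 2) :=
              mul_le_mul_of_nonneg_left hpack (by positivity)
        _ = 2 * (m:ℝ) * (64 ^ s * J ^ (2 * s - 2)) * lb ^ 2 := by ring
      have hRbd : |R| ≤ 2 * m * lb ^ 2 := hRabs.trans hSrlb
      refine ⟨fun hδ1 => ⟨fun hne => ?_, fun heq => ?_⟩, fun hδ2 => ?_⟩
      · -- (i) first, big
        have hδc : (δ i' : ℝ) = -(ι₀:ℝ) := by rw [hδ1]; push_cast; ring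
        by_cases hA : A = 0
        · have hab : a = b := by
            have h1 : (ι₀:ℝ) * a + (δ i' : ℝ) * b = 0 := by rw [← hAdef]; exact hA
            rw [hδc] at h1
            rcases hι₀ with h | h <;> rw [h] at h1 <;> push_cast at h1 <;>
              linarith only [h1]
          have hAψ0 : Aψ = 0 := by rw [hAψdef, hδc, hab]; ring
          have hPsiEq : PsiD s ι₀ δ i' d = Rψ / OmD ι₀ δ d := by
            rw [hPsiE, hρzero hA, hψdef, hAψ0, zero_add, sub_zero]
          rw [hPsiEq, abs_div]
          refine (div_le_div_iff_of_pos_right hΩpos).mpr ?_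
          refine hRψbd.trans ?_
          calc 2 * (m:ℝ) * (64 ^ s * J ^ (2 * s - 2)) * lb ^ 2
              = (2 * (m:ℝ) * 64 ^ s) * J ^ (2 * s - 2) * lb ^ 2 := by ring
          _ ≤ C * J ^ (2 * s - 2) * lb ^ 2 := by
              refine mul_le_mul_of_nonneg_right (mul_le_mul_of_nonneg_right ?_
                (Real.rpow_nonneg hJ0.le _)) (sq_nonneg lb)
              have h9 : 2 * (m:ℝ) * 64 ^ s ≤ 2 * (m:ℝ) * 64 ^ s * (1 + s) :=
                le_mul_of_one_le_right (by positivity) (by linarith only [hs])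
              linarith only [h9, hC1]
        · have hQA : |Aψ| ≤ (s * (64 ^ s * J ^ (2 * s - 2))) * |A| := by
            have hAψf : Aψ = (ι₀:ℝ) * (a ^ s - b ^ s) := by rw [hAψdef, hδc]; ring
            have hAf : A = (ι₀:ℝ) * (a - b) := by rw [hAdef, hδc]; ring
            have h1 : |Aψ| = |a ^ s - b ^ s| := by rw [hAψf, abs_mul, hι₀abs, one_mul]
            have h2 : |A| = |a - b| := by rw [hAf, abs_mul, hι₀abs, one_mul]
            rw [h1, h2]
            have h3 := abs_rpow_sub_rpow_le hs1 ha0 hb0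
            have h4 := mul_le_mul_of_nonneg_right
              (mul_le_mul_of_nonneg_left hmaxQ hs0) (abs_nonneg (a - b))
            calc |a ^ s - b ^ s| ≤ s * (max a b) ^ (s - 1) * |a - b| := h3
            _ ≤ s * (64 ^ s * J ^ (2 * s - 2)) * |a - b| := h4
          have hcore := core (Rψ := Rψ) hΩdef hΩne hA hQA
          rw [hPsiE, hψdef, hρpos hA]
          refine hcore.trans ?_
          refine (div_le_div_iff_of_pos_right hΩpos).mpr ?_
          have h9 := mul_le_mul_of_nonneg_left hRbd
            (by positivity : (0:ℝ) ≤ s * (64 ^ s * J ^ (2 * s - 2)))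
          have h10 : 2 * (m:ℝ) * (64 ^ s * J ^ (2 * s - 2)) * lb ^ 2
              + (s * (64 ^ s * J ^ (2 * s - 2))) * (2 * (m:ℝ) * lb ^ 2)
              = (2 * (m:ℝ) * 64 ^ s * (1 + s)) * J ^ (2 * s - 2) * lb ^ 2 := by ring
          have h11 : |Rψ| + (s * (64 ^ s * J ^ (2 * s - 2))) * |R|
              ≤ (2 * (m:ℝ) * 64 ^ s * (1 + s)) * J ^ (2 * s - 2) * lb ^ 2 := by
            linarith only [hRψbd, h9, h10]
          refine h11.trans ?_
          exact mul_le_mul_of_nonneg_right (mul_le_mul_of_nonneg_right hC1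
            (Real.rpow_nonneg hJ0.le _)) (sq_nonneg lb)
      · -- (i) second, big
        have hδc : (δ i' : ℝ) = -(ι₀:ℝ) := by rw [hδ1]; push_cast; ring
        have hab : b = a := by rw [hbdef, hadef, hPdef, heq]
        have hA0 : A = 0 := by rw [hAdef, hδc, hab]; ring
        have hAψ0 : Aψ = 0 := by rw [hAψdef, hδc, hab]; ring
        have hPsiEq : PsiD s ι₀ δ i' d = Rψ / OmD ι₀ δ d := by
          rw [hPsiE, hρzero hA0, hψdef, hAψ0, zero_add, sub_zero]
        rw [hPsiEq, abs_div]
        refine (div_le_div_iff_of_pos_right hΩpos).mpr ?_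
        refine hRψabs.trans (hSrψlb.trans ?_)
        rw [hexp1]
        exact mul_le_mul_of_nonneg_right hC2
          (Real.rpow_nonneg (le_of_lt hlb0) _)
      · -- (ii) big
        have hδc : (δ i' : ℝ) = (ι₀:ℝ) := by rw [hδ2]
        have hAf : A = (ι₀:ℝ) * (a + b) := by rw [hAdef, hδc]; ring
        have hAabs : |A| = a + b := by
          rw [hAf, abs_mul, hι₀abs, one_mul, abs_of_nonneg (by linarith only [ha0, hb0])]
        have haJ2 : J ^ 2 / 2 ≤ a := by linarith only [hJ2, hJJ, hJT]
        have hJ2pos : (0:ℝ) < J ^ 2 := by positivity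
        have hApos : (0:ℝ) < |A| := by rw [hAabs]; linarith only [haJ2, hb0, hJ2pos, hJJ, hJT]
        have hAne : A ≠ 0 := by
          intro h
          rw [h, abs_zero] at hApos
          exact lt_irrefl _ hApos
        have hΩbig : J ^ 2 / 4 ≤ |OmD ι₀ δ d| := by
          have h1 : |A| - |R| ≤ |OmD ι₀ δ d| := by
            rw [hΩdef]
            have h2 := abs_add_le (A + R) (-R)
            simp only [add_neg_cancel_right, abs_neg] at h2
            linarith only [h2]
          have h2 : |R| ≤ 36 * J := by
            refine hRabs.trans (hSrσ.trans ?_)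
            have h3 : σ ^ 2 ≤ (6 * Real.sqrt J) ^ 2 := pow_le_pow_left₀ hσ0 hσ6 2
            have h4 : ((6:ℝ) * Real.sqrt J) ^ 2 = 36 * J := by
              rw [mul_pow, Real.sq_sqrt hJ0.le]
              norm_num
            linarith only [h3, h4]
          linarith only [h1, h2, hAabs, haJ2, hb0, hJJ, hJT]
        have hQA : |Aψ| ≤ (64 ^ s * J ^ (2 * s - 2)) * |A| := by
          have h1 : |Aψ| = a ^ s + b ^ s := by
            have h0 : Aψ = (ι₀:ℝ) * (a ^ s + b ^ s) := by rw [hAψdef, hδc]; ring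
            rw [h0, abs_mul, hι₀abs, one_mul, abs_of_nonneg (by positivity)]
          rw [h1, hAabs]
          have h2 : a ^ s ≤ a * (max a b) ^ (s - 1) :=
            rpow_le_mul_rpow ha0 (le_max_left a b) hs1
          have h3 : b ^ s ≤ b * (max a b) ^ (s - 1) :=
            rpow_le_mul_rpow hb0 (le_max_right a b) hs1
          calc a ^ s + b ^ s ≤ a * (max a b) ^ (s - 1) + b * (max a b) ^ (s - 1) :=
                add_le_add h2 h3
          _ = (a + b) * (max a b) ^ (s - 1) := by ring
          _ ≤ (a + b) * (64 ^ s * J ^ (2 * s - 2)) :=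
              mul_le_mul_of_nonneg_left hmaxQ (by linarith only [ha0, hb0])
          _ = (64 ^ s * J ^ (2 * s - 2)) * (a + b) := by ring
        have hcore := core (Rψ := Rψ) hΩdef hΩne hAne hQA
        rw [hPsiE, hψdef, hρpos hAne]
        refine hcore.trans ?_
        have h9 := mul_le_mul_of_nonneg_left hRbd
          (by positivity : (0:ℝ) ≤ 64 ^ s * J ^ (2 * s - 2))
        have hnum : |Rψ| + (64 ^ s * J ^ (2 * s - 2)) * |R|
            ≤ (4 * (m:ℝ) * 64 ^ s) * J ^ (2 * s - 2) * lb ^ 2 := by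
          have h10 : 2 * (m:ℝ) * (64 ^ s * J ^ (2 * s - 2)) * lb ^ 2
              + (64 ^ s * J ^ (2 * s - 2)) * (2 * (m:ℝ) * lb ^ 2)
              = (4 * (m:ℝ) * 64 ^ s) * J ^ (2 * s - 2) * lb ^ 2 := by ring
          linarith only [hRψbd, h9, h10]
        have hnum0 : (0:ℝ) ≤ (4 * (m:ℝ) * 64 ^ s) * J ^ (2 * s - 2) * lb ^ 2 := by positivity
        have hfin : (|Rψ| + (64 ^ s * J ^ (2 * s - 2)) * |R|) / |OmD ι₀ δ d|
            ≤ ((4 * (m:ℝ) * 64 ^ s) * J ^ (2 * s - 2) * lb ^ 2) / (J ^ 2 / 4) :=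
          div_le_div₀ hnum0 hnum (by positivity) hΩbig
        refine hfin.trans ?_
        have hJsplit : J ^ (2 * s - 2) = J ^ (2 * s - 4) * J ^ 2 := by
          rw [← Real.rpow_natCast J 2, ← Real.rpow_add hJ0]
          congr 1
          push_cast
          ring
        have heqJ : ((4 * (m:ℝ) * 64 ^ s) * J ^ (2 * s - 2) * lb ^ 2) / (J ^ 2 / 4)
            = (16 * (m:ℝ) * 64 ^ s) * J ^ (2 * s - 4) * lb ^ 2 := by
          rw [hJsplit]
          field_simp
          ring
        rw [heqJ]
        exact mul_le_mul_of_nonneg_right (mul_le_mul_of_nonneg_right hC3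
          (Real.rpow_nonneg hJ0.le _)) (sq_nonneg lb)
    · -- SMALL CASE
      push_neg at hJT
      have hJT' : J ≤ 10000 := le_of_lt hJT
      have hJsq8 : J ^ 2 ≤ 10 ^ 8 := by
        have h1 : J ^ 2 ≤ 10000 ^ 2 := pow_le_pow_left₀ hJ0.le hJT' 2
        linarith only [h1]
      have haT : a ≤ 64 * 10 ^ 8 := by linarith only [hJ2, hJsq8]
      have hbT : b ≤ 64 * 10 ^ 8 := by linarith only [hbJ, hJsq8]
      have hσ36 : σ ^ 2 ≤ 360000 := by
        have h3 : σ ^ 2 ≤ (6 * Real.sqrt J) ^ 2 := pow_le_pow_left₀ hσ0 hσ6 2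
        have h4 : ((6:ℝ) * Real.sqrt J) ^ 2 = 36 * J := by
          rw [mul_pow, Real.sq_sqrt hJ0.le]
          norm_num
        linarith only [h3, h4, hJT']
      have hnsqT : ∀ k ∈ E, nsq (d.1 k) ≤ 360000 := by
        intro k hk
        have h1 : nsq (d.1 k) = nrm (d.1 k) ^ 2 := (nrm_sq _).symm
        have h3 : nrm (d.1 k) ^ 2 ≤ σ ^ 2 := pow_le_pow_left₀ (nrm_nonneg _) (hsm k hk) 2
        linarith only [h1, h3, hσ36]
      have haK : a ^ s ≤ K := by
        rw [hKdef]
        exact Real.rpow_le_rpow ha0 (by linarith only [haT]) hs0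
      have hbK : b ^ s ≤ K := by
        rw [hKdef]
        exact Real.rpow_le_rpow hb0 (by linarith only [hbT]) hs0
      have hnsqK : ∀ k ∈ E, nsq (d.1 k) ^ s ≤ K := by
        intro k hk
        rw [hKdef]
        exact Real.rpow_le_rpow (nsq_nonneg _) (by linarith only [hnsqT k hk]) hs0
      have hSrψK : Srψ ≤ 2 * m * K := by
        have h1 : Srψ ≤ E.card * K := by
          rw [hSrψdef]
          calc ∑ i ∈ E, nsq (d.1 i) ^ s ≤ ∑ _i ∈ E, K := Finset.sum_le_sum hnsqK
          _ = E.card * K := by rw [Finset.sum_const, nsmul_eq_mul]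
        exact h1.trans (mul_le_mul_of_nonneg_right hcardE hK0)
      have hSrT : Sr ≤ 2 * m * 360000 := by
        have h1 : Sr ≤ E.card * 360000 := by
          rw [hSrdef]
          calc ∑ i ∈ E, nsq (d.1 i) ≤ ∑ _i ∈ E, (360000:ℝ) := Finset.sum_le_sum hnsqT
          _ = E.card * 360000 := by rw [Finset.sum_const, nsmul_eq_mul]
        exact h1.trans (mul_le_mul_of_nonneg_right hcardE (by norm_num))
      have hAψbd : |Aψ| ≤ 2 * K := by
        rw [hAψdef]
        have h1 := abs_add_le ((ι₀:ℝ) * a ^ s) ((δ i' : ℝ) * b ^ s)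
        rw [abs_mul, abs_mul, hι₀abs, hδabs i', one_mul, one_mul,
          abs_of_nonneg (Real.rpow_nonneg ha0 s), abs_of_nonneg (Real.rpow_nonneg hb0 s)] at h1
        linarith only [h1, haK, hbK]
      have hψabs : |psiD s ι₀ δ d| ≤ (2 * (m:ℝ) + 2) * K := by
        rw [hψdef]
        have h2 : |Rψ| ≤ 2 * m * K := hRψabs.trans hSrψK
        calc |Aψ + Rψ| ≤ |Aψ| + |Rψ| := abs_add_le _ _
        _ ≤ (2 * (m:ℝ) + 2) * K := by linarith only [hAψbd, h2]
      have hρabs : |rhoD s ι₀ δ i' d| ≤ 2 * K := by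
        by_cases hA : A = 0
        · rw [hρzero hA, abs_zero]
          positivity
        · rw [hρpos hA, abs_div]
          have h1 : |Aψ| / |A| ≤ |Aψ| := div_le_self (abs_nonneg _) (hAint hA)
          linarith only [h1, hAψbd]
      have hΩub : |OmD ι₀ δ d| ≤ (2 * (m:ℝ) + 13) * 10 ^ 9 := by
        rw [hΩdef]
        have h1 : |A| ≤ a + b := by
          rw [hAdef]
          have h2 := abs_add_le ((ι₀:ℝ) * a) ((δ i' : ℝ) * b)
          rw [abs_mul, abs_mul, hι₀abs, hδabs i', one_mul, one_mul,
            abs_of_nonneg ha0, abs_of_nonneg hb0] at h2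
          linarith only [h2]
        have h2 : |R| ≤ 2 * m * 360000 := hRabs.trans hSrT
        calc |A + R| ≤ |A| + |R| := abs_add_le _ _
        _ ≤ (2 * (m:ℝ) + 13) * 10 ^ 9 := by linarith only [h1, h2, haT, hbT, hm0]
      have hgen : |PsiD s ι₀ δ i' d|
          ≤ (|psiD s ι₀ δ d| + |rhoD s ι₀ δ i' d| * |OmD ι₀ δ d|) / |OmD ι₀ δ d| := by
        have e1 : |PsiD s ι₀ δ i' d|
            ≤ |psiD s ι₀ δ d| / |OmD ι₀ δ d| + |rhoD s ι₀ δ i' d| := by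
          rw [hPsiE]
          refine (abs_sub _ _).trans ?_
          rw [abs_div]
        have e2 : |psiD s ι₀ δ d| / |OmD ι₀ δ d| + |rhoD s ι₀ δ i' d|
            = (|psiD s ι₀ δ d| + |rhoD s ι₀ δ i' d| * |OmD ι₀ δ d|) / |OmD ι₀ δ d| := by
          field_simp
        linarith only [e1, e2]
      have hnumC : |psiD s ι₀ δ d| + |rhoD s ι₀ δ i' d| * |OmD ι₀ δ d| ≤ C := by
        have h1 : |rhoD s ι₀ δ i' d| * |OmD ι₀ δ d| ≤ 2 * K * ((2 * (m:ℝ) + 13) * 10 ^ 9) :=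
          mul_le_mul hρabs hΩub (abs_nonneg _) (by positivity)
        linarith only [hψabs, h1, hC4]
      refine ⟨fun hδ1 => ⟨fun hne => ?_, fun heq => ?_⟩, fun hδ2 => ?_⟩
      · -- (i) first, small
        refine hgen.trans ?_
        refine (div_le_div_iff_of_pos_right hΩpos).mpr ?_
        refine hnumC.trans ?_
        have h1 : C * 1 ≤ C * J ^ (2 * s - 2) := mul_le_mul_of_nonneg_left hJpow2 hC0
        have h2 : C * J ^ (2 * s - 2) * 1 ≤ C * J ^ (2 * s - 2) * lb ^ 2 :=
          mul_le_mul_of_nonneg_left hlbsq1 (by positivity)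
        linarith only [h1, h2]
      · -- (i) second, small
        have hδc : (δ i' : ℝ) = -(ι₀:ℝ) := by rw [hδ1]; push_cast; ring
        have hab : b = a := by rw [hbdef, hadef, hPdef, heq]
        have hA0 : A = 0 := by rw [hAdef, hδc, hab]; ring
        have hAψ0 : Aψ = 0 := by rw [hAψdef, hδc, hab]; ring
        have hPsiEq : PsiD s ι₀ δ i' d = Rψ / OmD ι₀ δ d := by
          rw [hPsiE, hρzero hA0, hψdef, hAψ0, zero_add, sub_zero]
        rw [hPsiEq, abs_div]
        refine (div_le_div_iff_of_pos_right hΩpos).mpr ?_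
        have h1 : |Rψ| ≤ 2 * m * K := hRψabs.trans hSrψK
        have hlb2s1 : (1:ℝ) ≤ lb ^ (2 * s) := Real.one_le_rpow hlb1 (by linarith only [hs])
        have h2 : C * 1 ≤ C * lb ^ (2 * s) := mul_le_mul_of_nonneg_left hlb2s1 hC0
        linarith only [h1, h2, hC5]
      · -- (ii) small
        have h0 : |psiD s ι₀ δ d| / |OmD ι₀ δ d| ≤ |psiD s ι₀ δ d| :=
          div_le_self (abs_nonneg _) hΩint
        have e1 : |PsiD s ι₀ δ i' d|
            ≤ |psiD s ι₀ δ d| / |OmD ι₀ δ d| + |rhoD s ι₀ δ i' d| := by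
          rw [hPsiE]
          refine (abs_sub _ _).trans ?_
          rw [abs_div]
        have h2 : |PsiD s ι₀ δ i' d| ≤ (2 * (m:ℝ) + 4) * K := by
          linarith only [e1, h0, hψabs, hρabs]
        refine h2.trans ?_
        have h3 : C * 1 ≤ C * J ^ (2 * s - 4) := mul_le_mul_of_nonneg_left hJpow4 hC0
        have h4 : C * J ^ (2 * s - 4) * 1 ≤ C * J ^ (2 * s - 4) * lb ^ 2 :=
          mul_le_mul_of_nonneg_left hlbsq1 (by positivity)
        linarith only [hC6, h3, h4]

end
end
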